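/- arXiv:2010.15745 — 10 statements merged into one kernel-verified Lean document; each statement's English description precedes it below -/
import Mathlib

section
/- Let S be a nonempty finite set, P a substochastic matrix on S, and Φ : S → ℝ with ε ≤ Φ(s) ≤ 1 for all s ∈ S, where ε > 0. Then the series h(s) := ∑_{t=0}^{∞} ((D_Φ P)^t Φ)(s) converges for every s ∈ S (the summands are summable), and the limit satisfies 0 ≤ h(s) ≤ 1 for every s ∈ S. -/
/-- The matrix `D_Φ P : (s,s') ↦ (1-Φ(s))·P(s,s')` acting on vectors `x : S → ℝ`. -/
noncomputable def DPhiP {S : Type*} [Fintype S] (P : S → S → ℝ) (Φ : S → ℝ)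
    (x : S → ℝ) : S → ℝ :=
  fun s => (1 - Φ s) * ∑ s', P s s' * x s'

/-- Convergence of the series `h(s) = ∑_t ((D_Φ P)^t Φ)(s)` and the bounds `0 ≤ h ≤ 1`. -/
theorem hitting_series_converges {S : Type*} [Fintype S] [Nonempty S]
    (P : S → S → ℝ) (hP0 : ∀ s s', 0 ≤ P s s') (hP1 : ∀ s, ∑ s', P s s' ≤ 1)
    (Φ : S → ℝ) (ε : ℝ) (hε : 0 < ε) (hΦ : ∀ s, ε ≤ Φ s ∧ Φ s ≤ 1) :
    ∀ s : S,
      Summable (fun t : ℕ => (DPhiP P Φ)^[t] Φ s) ∧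
      0 ≤ ∑' t : ℕ, (DPhiP P Φ)^[t] Φ s ∧
      ∑' t : ℕ, (DPhiP P Φ)^[t] Φ s ≤ 1 := by
  set f := DPhiP P Φ with hf
  have hε1 : ε ≤ 1 := le_trans (hΦ (Classical.arbitrary S)).1 (hΦ (Classical.arbitrary S)).2
  -- key step bound: if 0 ≤ x ≤ c pointwise, then 0 ≤ f x ≤ (1-ε) c pointwise
  have hstep : ∀ (x : S → ℝ) (c : ℝ), 0 ≤ c → (∀ s, 0 ≤ x s ∧ x s ≤ c) →
      ∀ s, 0 ≤ f x s ∧ f x s ≤ (1 - ε) * c := by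
    intro x c hc hx s
    have h1 : (0:ℝ) ≤ 1 - Φ s := by linarith [(hΦ s).2]
    have h2 : 1 - Φ s ≤ 1 - ε := by linarith [(hΦ s).1]
    have hsum0 : 0 ≤ ∑ s', P s s' * x s' :=
      Finset.sum_nonneg fun s' _ => mul_nonneg (hP0 s s') (hx s').1
    have hsumc : ∑ s', P s s' * x s' ≤ c := by
      calc ∑ s', P s s' * x s' ≤ ∑ s', P s s' * c :=
            Finset.sum_le_sum fun s' _ => mul_le_mul_of_nonneg_left (hx s').2 (hP0 s s')
        _ = (∑ s', P s s') * c := by rw [Finset.sum_mul]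
        _ ≤ 1 * c := mul_le_mul_of_nonneg_right (hP1 s) hc
        _ = c := one_mul c
    constructor
    · exact mul_nonneg h1 hsum0
    · exact mul_le_mul h2 hsumc hsum0 (by linarith)
  -- iterate bounds
  have hiter : ∀ t s, 0 ≤ f^[t] Φ s ∧ f^[t] Φ s ≤ (1 - ε) ^ t := by
    intro t
    induction t with
    | zero => intro s; simpa using ⟨le_trans hε.le (hΦ s).1, (hΦ s).2⟩
    | succ n ih =>
      intro s
      have := hstep (f^[n] Φ) ((1 - ε) ^ n) (pow_nonneg (by linarith) n) ih s
      rw [Function.iterate_succ_apply']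
      simpa [pow_succ, mul_comm] using this
  have hne : ∀ t s, 0 ≤ f^[t] Φ s := fun t s => (hiter t s).1
  -- partial sums ≤ 1
  have hpartial : ∀ n s, ∑ t ∈ Finset.range n, f^[t] Φ s ≤ 1 := by
    intro n
    induction n with
    | zero => intro s; simp
    | succ n ih =>
      intro s
      have hlin : ∀ s, f (fun s' => ∑ t ∈ Finset.range n, f^[t] Φ s') s
          = ∑ t ∈ Finset.range n, f (f^[t] Φ) s := by
        intro s
        simp only [hf, DPhiP, Finset.mul_sum]
        rw [Finset.sum_comm]
      have hrec : ∑ t ∈ Finset.range (n+1), f^[t] Φ s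
          = Φ s + f (fun s' => ∑ t ∈ Finset.range n, f^[t] Φ s') s := by
        rw [Finset.sum_range_succ', hlin, add_comm]
        simp [Function.iterate_succ_apply']
      rw [hrec]
      have hx : ∀ s', 0 ≤ (fun s' => ∑ t ∈ Finset.range n, f^[t] Φ s') s' ∧
          (fun s' => ∑ t ∈ Finset.range n, f^[t] Φ s') s' ≤ 1 := fun s' =>
        ⟨Finset.sum_nonneg fun t _ => hne t s', ih s'⟩
      have h1 : (0:ℝ) ≤ 1 - Φ s := by linarith [(hΦ s).2]
      have hsum0 : 0 ≤ ∑ s', P s s' * (∑ t ∈ Finset.range n, f^[t] Φ s') :=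
        Finset.sum_nonneg fun s' _ => mul_nonneg (hP0 s s') (hx s').1
      have hsumc : ∑ s', P s s' * (∑ t ∈ Finset.range n, f^[t] Φ s') ≤ 1 := by
        calc ∑ s', P s s' * (∑ t ∈ Finset.range n, f^[t] Φ s')
            ≤ ∑ s', P s s' * 1 :=
              Finset.sum_le_sum fun s' _ => mul_le_mul_of_nonneg_left (hx s').2 (hP0 s s')
          _ = ∑ s', P s s' := by simp
          _ ≤ 1 := hP1 s
      have : f (fun s' => ∑ t ∈ Finset.range n, f^[t] Φ s') s ≤ 1 - Φ s := by
        simpa [hf, DPhiP] using mul_le_mul_of_nonneg_left hsumc h1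
      linarith
  intro s
  have hsummable : Summable (fun t : ℕ => f^[t] Φ s) := by
    apply Summable.of_nonneg_of_le (fun t => hne t s) (fun t => (hiter t s).2)
    exact summable_geometric_of_lt_one (by linarith) (by linarith)
  refine ⟨hsummable, tsum_nonneg (fun t => hne t s), ?_⟩
  exact Summable.tsum_le_of_sum_range_le hsummable (fun n => hpartial n s)
end

section
/- Let S be a nonempty finite set, P a substochastic matrix on S, and Φ : S → ℝ with ε ≤ Φ(s) ≤ 1 for all s ∈ S, where ε > 0. Then the vector h(s) := ∑_{t=0}^{∞} ((D_Φ P)^t Φ)(s) satisfies the Bellman-type recursion h(s) = Φ(s) + (1−Φ(s))·∑_{s'} P(s,s')·h(s') for all s ∈ S, and h is the unique function x : S → ℝ satisfying x(s) = Φ(s) + (1−Φ(s))·∑_{s'} P(s,s')·x(s') for all s. -/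
/-- The vector `h(s) = ∑_t ((D_Φ P)^t Φ)(s)` satisfies the Bellman-type recursion
`h(s) = Φ(s) + (1-Φ(s))·∑_{s'} P(s,s')·h(s')` and is its unique solution. -/
theorem hitting_series_recursion {S : Type*} [Fintype S] [Nonempty S]
    (P : S → S → ℝ) (hP0 : ∀ s s', 0 ≤ P s s') (hP1 : ∀ s, ∑ s', P s s' ≤ 1)
    (Φ : S → ℝ) (ε : ℝ) (hε : 0 < ε) (hΦ : ∀ s, ε ≤ Φ s ∧ Φ s ≤ 1) :
    (∀ s : S, (∑' t : ℕ, (DPhiP P Φ)^[t] Φ s)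
        = Φ s + (1 - Φ s) * ∑ s', P s s' * (∑' t : ℕ, (DPhiP P Φ)^[t] Φ s')) ∧
    (∀ x : S → ℝ, (∀ s, x s = Φ s + (1 - Φ s) * ∑ s', P s s' * x s') →
      x = fun s => ∑' t : ℕ, (DPhiP P Φ)^[t] Φ s) := by
  obtain ⟨s₀⟩ := ‹Nonempty S›
  have hε1 : ε ≤ 1 := le_trans (hΦ s₀).1 (hΦ s₀).2
  set g : ℕ → S → ℝ := fun t => (DPhiP P Φ)^[t] Φ with hg
  have hstep : ∀ t s, g (t+1) s = (1 - Φ s) * ∑ s', P s s' * g t s' := by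
    intro t s
    simp [hg, Function.iterate_succ_apply', DPhiP]
  have hbound : ∀ t s, 0 ≤ g t s ∧ g t s ≤ (1-ε)^t := by
    intro t
    induction t with
    | zero =>
      intro s
      exact ⟨le_trans hε.le (hΦ s).1, by simpa [hg] using (hΦ s).2⟩
    | succ t ih =>
      intro s
      have hΦs := hΦ s
      have h0 : (0:ℝ) ≤ 1 - Φ s := by linarith [hΦs.2]
      have hle : 1 - Φ s ≤ 1 - ε := by linarith [hΦs.1]
      have hsum0 : 0 ≤ ∑ s', P s s' * g t s' :=
        Finset.sum_nonneg fun s' _ => mul_nonneg (hP0 s s') (ih s').1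
      have hpow : (0:ℝ) ≤ (1-ε)^t := pow_nonneg (by linarith) t
      have hsum1 : ∑ s', P s s' * g t s' ≤ (1-ε)^t := by
        calc ∑ s', P s s' * g t s' ≤ ∑ s', P s s' * (1-ε)^t :=
              Finset.sum_le_sum fun s' _ =>
                mul_le_mul_of_nonneg_left (ih s').2 (hP0 s s')
          _ = (∑ s', P s s') * (1-ε)^t := by rw [← Finset.sum_mul]
          _ ≤ 1 * (1-ε)^t := mul_le_mul_of_nonneg_right (hP1 s) hpow
          _ = (1-ε)^t := one_mul _
      rw [hstep t s]
      constructor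
      · exact mul_nonneg h0 hsum0
      · calc (1 - Φ s) * ∑ s', P s s' * g t s' ≤ (1-ε) * (1-ε)^t :=
              mul_le_mul hle hsum1 hsum0 (by linarith)
          _ = (1-ε)^(t+1) := (pow_succ' _ _).symm
  have hsummable : ∀ s, Summable (fun t => g t s) := fun s =>
    Summable.of_nonneg_of_le (fun t => (hbound t s).1) (fun t => (hbound t s).2)
      (summable_geometric_of_lt_one (by linarith) (by linarith))
  have hrec : ∀ s, (∑' t, g t s) = Φ s + (1 - Φ s) * ∑ s', P s s' * ∑' t, g t s' := by
    intro s
    rw [Summable.tsum_eq_zero_add (hsummable s)]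
    have h0 : g 0 s = Φ s := rfl
    rw [h0]
    congr 1
    calc ∑' t, g (t+1) s = ∑' t, (1 - Φ s) * ∑ s', P s s' * g t s' := by
          simp_rw [hstep]
      _ = (1 - Φ s) * ∑' t, ∑ s', P s s' * g t s' := tsum_mul_left
      _ = (1 - Φ s) * ∑ s', ∑' t, P s s' * g t s' := by
          rw [Summable.tsum_finsetSum fun s' _ => (hsummable s').mul_left (P s s')]
      _ = (1 - Φ s) * ∑ s', P s s' * ∑' t, g t s' := by
          congr 1
          exact Finset.sum_congr rfl fun s' _ => tsum_mul_left
  refine ⟨hrec, ?_⟩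
  intro x hx
  funext s
  set d : S → ℝ := fun s => x s - ∑' t, g t s with hd
  have hdrec : ∀ s, d s = (1 - Φ s) * ∑ s', P s s' * d s' := by
    intro s
    have hsplit : ∑ s', P s s' * d s'
        = (∑ s', P s s' * x s') - ∑ s', P s s' * (∑' t, g t s') := by
      rw [← Finset.sum_sub_distrib]
      exact Finset.sum_congr rfl fun s' _ => by simp [hd]; ring
    simp only [hd]
    rw [hsplit, hx s, hrec s]
    ring
  obtain ⟨m, -, hm⟩ := Finset.exists_max_image Finset.univ (fun s => |d s|)
    ⟨s₀, Finset.mem_univ s₀⟩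
  have hMle : ∀ s, |d s| ≤ (1-ε) * |d m| := by
    intro s
    have hΦs := hΦ s
    have h0 : (0:ℝ) ≤ 1 - Φ s := by linarith [hΦs.2]
    rw [hdrec s, abs_mul, abs_of_nonneg h0]
    have h1 : |∑ s', P s s' * d s'| ≤ |d m| := by
      calc |∑ s', P s s' * d s'| ≤ ∑ s', |P s s' * d s'| :=
            Finset.abs_sum_le_sum_abs _ _
        _ ≤ ∑ s', P s s' * |d m| := Finset.sum_le_sum fun s' _ => by
            rw [abs_mul, abs_of_nonneg (hP0 s s')]
            exact mul_le_mul_of_nonneg_left (hm s' (Finset.mem_univ s')) (hP0 s s')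
        _ = (∑ s', P s s') * |d m| := by rw [← Finset.sum_mul]
        _ ≤ 1 * |d m| := mul_le_mul_of_nonneg_right (hP1 s) (abs_nonneg _)
        _ = |d m| := one_mul _
    exact mul_le_mul (by linarith [hΦs.1]) h1 (abs_nonneg _) (by linarith)
  have hm0 : |d m| ≤ 0 := by
    have := hMle m
    nlinarith [abs_nonneg (d m)]
  have hs0 : d s = 0 := by
    have := le_trans (hMle s) (by nlinarith : (1-ε) * |d m| ≤ 0)
    exact abs_eq_zero.mp (le_antisymm this (abs_nonneg _))
  have : x s = ∑' t, g t s := by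
    have := hs0
    simp only [hd] at this
    linarith
  exact this
end

section
/- Let S be a nonempty finite set, P a substochastic matrix on S, and Φ : S → ℝ with ε ≤ Φ(s) ≤ 1 for all s ∈ S, where ε > 0. Define T : (S → ℝ) → (S → ℝ) by (T x)(s) = Φ(s) + (1−Φ(s))·∑_{s'} P(s,s')·x(s'). Then ‖T x − T y‖_∞ ≤ (1−ε)·‖x − y‖_∞ for all x, y : S → ℝ; consequently, for every initial vector x₀ and every k ∈ ℕ, ‖T^k x₀ − h‖_∞ ≤ (1−ε)^k·‖x₀ − h‖_∞, where h is the unique fixed point of T. -/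
/-- The Bellman-type operator `(T x)(s) = Φ(s) + (1-Φ(s))·∑_{s'} P(s,s')·x(s')`. -/
noncomputable def Tinf {S : Type*} [Fintype S] (P : S → S → ℝ) (Φ : S → ℝ)
    (x : S → ℝ) : S → ℝ :=
  fun s => Φ s + (1 - Φ s) * ∑ s', P s s' * x s'

lemma Tinf_contr_aux {S : Type*} [Fintype S]
    (P : S → S → ℝ) (hP0 : ∀ s s', 0 ≤ P s s') (hP1 : ∀ s, ∑ s', P s s' ≤ 1)
    (Φ : S → ℝ) (ε : ℝ) (hΦ : ∀ s, ε ≤ Φ s ∧ Φ s ≤ 1) (hε1 : ε ≤ 1)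
    (x y : S → ℝ) : ‖Tinf P Φ x - Tinf P Φ y‖ ≤ (1 - ε) * ‖x - y‖ := by
  have hnn : 0 ≤ (1 - ε) * ‖x - y‖ :=
    mul_nonneg (by linarith) (norm_nonneg _)
  rw [pi_norm_le_iff_of_nonneg hnn]
  intro s
  have hs := hΦ s
  have key : (Tinf P Φ x - Tinf P Φ y) s
      = (1 - Φ s) * ∑ s', P s s' * (x s' - y s') := by
    have hsum : ∑ s', P s s' * (x s' - y s')
        = (∑ s', P s s' * x s') - ∑ s', P s s' * y s' := by
      rw [← Finset.sum_sub_distrib]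
      exact Finset.sum_congr rfl fun s' _ => by ring
    simp only [Tinf, Pi.sub_apply, hsum]
    ring
  rw [key, Real.norm_eq_abs, abs_mul]
  have h1 : |1 - Φ s| = 1 - Φ s := abs_of_nonneg (by linarith [hs.2])
  have h2 : |∑ s', P s s' * (x s' - y s')| ≤ ‖x - y‖ := by
    calc |∑ s', P s s' * (x s' - y s')| ≤ ∑ s', |P s s' * (x s' - y s')| :=
          Finset.abs_sum_le_sum_abs _ _
      _ ≤ ∑ s', P s s' * ‖x - y‖ := by
          apply Finset.sum_le_sum
          intro s' _
          rw [abs_mul, abs_of_nonneg (hP0 s s')]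
          apply mul_le_mul_of_nonneg_left _ (hP0 s s')
          have := norm_le_pi_norm (x - y) s'
          simpa [Real.norm_eq_abs] using this
      _ = (∑ s', P s s') * ‖x - y‖ := by rw [Finset.sum_mul]
      _ ≤ 1 * ‖x - y‖ := mul_le_mul_of_nonneg_right (hP1 s) (norm_nonneg _)
      _ = ‖x - y‖ := one_mul _
  calc |1 - Φ s| * |∑ s', P s s' * (x s' - y s')|
      ≤ (1 - Φ s) * ‖x - y‖ := by
        rw [h1]; exact mul_le_mul_of_nonneg_left h2 (by linarith [hs.2])
    _ ≤ (1 - ε) * ‖x - y‖ :=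
        mul_le_mul_of_nonneg_right (by linarith [hs.1]) (norm_nonneg _)

/-- `T` is a `(1-ε)`-contraction in the sup norm, and its iterates converge
geometrically to its unique fixed point `h`. -/
theorem Tinf_contraction {S : Type*} [Fintype S] [Nonempty S]
    (P : S → S → ℝ) (hP0 : ∀ s s', 0 ≤ P s s') (hP1 : ∀ s, ∑ s', P s s' ≤ 1)
    (Φ : S → ℝ) (ε : ℝ) (hε : 0 < ε) (hΦ : ∀ s, ε ≤ Φ s ∧ Φ s ≤ 1) :
    (∀ x y : S → ℝ, ‖Tinf P Φ x - Tinf P Φ y‖ ≤ (1 - ε) * ‖x - y‖) ∧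
    (∃! h : S → ℝ, Tinf P Φ h = h) ∧
    (∀ h : S → ℝ, Tinf P Φ h = h →
      ∀ (x₀ : S → ℝ) (k : ℕ), ‖(Tinf P Φ)^[k] x₀ - h‖ ≤ (1 - ε) ^ k * ‖x₀ - h‖) := by
  obtain ⟨s₀⟩ := ‹Nonempty S›
  have hε1 : ε ≤ 1 := le_trans (hΦ s₀).1 (hΦ s₀).2
  have hc := Tinf_contr_aux P hP0 hP1 Φ ε hΦ hε1
  have hK0 : (0:ℝ) ≤ 1 - ε := by linarith
  set K : NNReal := ⟨1 - ε, hK0⟩ with hK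
  have hlip : LipschitzWith K (Tinf P Φ) := by
    apply LipschitzWith.of_dist_le_mul
    intro x y
    have := hc x y; simp only [dist_eq_norm]; exact this
  have hcontr : ContractingWith K (Tinf P Φ) := by
    constructor
    · change (1 - ε : ℝ) < 1; linarith
    · exact hlip
  have huniq : ∀ h h' : S → ℝ, Tinf P Φ h = h → Tinf P Φ h' = h' → h = h' := by
    intro h h' hh hh'
    have := hc h h'
    rw [hh, hh'] at this
    have hn : ‖h - h'‖ ≤ 0 := by nlinarith [norm_nonneg (h - h')]
    have : h - h' = 0 := norm_le_zero_iff.mp hn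
    exact sub_eq_zero.mp this
  refine ⟨hc, ?_, ?_⟩
  · refine ⟨hcontr.fixedPoint (Tinf P Φ), hcontr.fixedPoint_isFixedPt, ?_⟩
    intro h hh
    exact huniq h _ hh hcontr.fixedPoint_isFixedPt
  · intro h hh x₀ k
    induction k with
    | zero => simp
    | succ n ih =>
      rw [Function.iterate_succ_apply']
      calc ‖Tinf P Φ ((Tinf P Φ)^[n] x₀) - h‖
          = ‖Tinf P Φ ((Tinf P Φ)^[n] x₀) - Tinf P Φ h‖ := by rw [hh]
        _ ≤ (1 - ε) * ‖(Tinf P Φ)^[n] x₀ - h‖ := hc _ _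
        _ ≤ (1 - ε) * ((1 - ε) ^ n * ‖x₀ - h‖) :=
            mul_le_mul_of_nonneg_left ih hK0
        _ = (1 - ε) ^ (n + 1) * ‖x₀ - h‖ := by ring
end

section
/- Let S be a nonempty finite set, P a substochastic matrix on S, r : S × S → ℝ, γ ∈ [0,1), and Φ : S → ℝ with 0 < Φ(s) ≤ 1 for all s. Let h : S → ℝ satisfy h(s) = Φ(s) + (1−Φ(s))·∑_{s'} P(s,s')·h(s') and Φ(s) ≤ h(s) ≤ 1 for all s, and let v : S → ℝ be any fixed function. Define T¹ : (S → ℝ) → (S → ℝ) by (T¹ u)(s) = (1/h(s))·[ v(s)·Φ(s) + (1−Φ(s))·∑_{s'} P(s,s')·h(s')·( r(s,s') + γ·u(s') ) ]. Then ‖T¹ u − T¹ w‖_∞ ≤ γ·‖u − w‖_∞ for all u, w : S → ℝ, and T¹ has a unique fixed point. -/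
/-- The Bellman-type operator `T¹` for the conditional value function `v^1`:
`(T¹ u)(s) = (1/h(s))·[v(s)·Φ(s) + (1-Φ(s))·∑_{s'} P(s,s')·h(s')·(r(s,s') + γ·u(s'))]`. -/
noncomputable def Tone {S : Type*} [Fintype S] (P : S → S → ℝ) (r : S → S → ℝ)
    (γ : ℝ) (Φ h v : S → ℝ) (u : S → ℝ) : S → ℝ :=
  fun s => (1 / h s) *
    (v s * Φ s + (1 - Φ s) * ∑ s', P s s' * (h s' * (r s s' + γ * u s')))

/-- `T¹` is a `γ`-contraction in the sup norm and has a unique fixed point. -/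
theorem Tone_contraction {S : Type*} [Fintype S] [Nonempty S]
    (P : S → S → ℝ) (hP0 : ∀ s s', 0 ≤ P s s') (hP1 : ∀ s, ∑ s', P s s' ≤ 1)
    (r : S → S → ℝ) (γ : ℝ) (hγ0 : 0 ≤ γ) (hγ1 : γ < 1)
    (Φ : S → ℝ) (hΦ : ∀ s, 0 < Φ s ∧ Φ s ≤ 1)
    (h : S → ℝ)
    (hh : ∀ s, h s = Φ s + (1 - Φ s) * ∑ s', P s s' * h s')
    (hhb : ∀ s, Φ s ≤ h s ∧ h s ≤ 1)
    (v : S → ℝ) :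
    (∀ u w : S → ℝ, ‖Tone P r γ Φ h v u - Tone P r γ Φ h v w‖ ≤ γ * ‖u - w‖) ∧
    (∃! u : S → ℝ, Tone P r γ Φ h v u = u) := by
  have hpos : ∀ s, 0 < h s := fun s => lt_of_lt_of_le (hΦ s).1 (hhb s).1
  have key : ∀ u w : S → ℝ, ‖Tone P r γ Φ h v u - Tone P r γ Φ h v w‖ ≤ γ * ‖u - w‖ := by
    intro u w
    have hnn : 0 ≤ γ * ‖u - w‖ := mul_nonneg hγ0 (norm_nonneg _)
    rw [pi_norm_le_iff_of_nonneg hnn]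
    intro s
    have hPhs : ∀ s', 0 ≤ P s s' * h s' :=
      fun s' => mul_nonneg (hP0 s s') (le_of_lt (hpos s'))
    have e : (Tone P r γ Φ h v u - Tone P r γ Φ h v w) s
        = (1 / h s) * ((1 - Φ s) * ∑ s', P s s' * h s' * (γ * (u s' - w s'))) := by
      have hs : (∑ s', P s s' * (h s' * (r s s' + γ * u s')))
          - (∑ s', P s s' * (h s' * (r s s' + γ * w s')))
          = ∑ s', P s s' * h s' * (γ * (u s' - w s')) := by
        rw [← Finset.sum_sub_distrib]
        exact Finset.sum_congr rfl fun s' _ => by ring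
      simp only [Pi.sub_apply, Tone]
      rw [← hs]; ring
    rw [e, Real.norm_eq_abs, abs_mul, abs_mul]
    have h1 : |1 / h s| = 1 / h s := abs_of_pos (one_div_pos.mpr (hpos s))
    have h2 : |1 - Φ s| = 1 - Φ s := abs_of_nonneg (by linarith [(hΦ s).2])
    rw [h1, h2]
    have hsum : |∑ s', P s s' * h s' * (γ * (u s' - w s'))|
        ≤ (∑ s', P s s' * h s') * (γ * ‖u - w‖) := by
      rw [Finset.sum_mul]
      refine (Finset.abs_sum_le_sum_abs _ _).trans (Finset.sum_le_sum fun s' _ => ?_)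
      rw [abs_mul, abs_of_nonneg (hPhs s')]
      refine mul_le_mul_of_nonneg_left ?_ (hPhs s')
      rw [abs_mul, abs_of_nonneg hγ0]
      refine mul_le_mul_of_nonneg_left ?_ hγ0
      exact norm_le_pi_norm (u - w) s'
    calc (1 / h s) * ((1 - Φ s) * |∑ s', P s s' * h s' * (γ * (u s' - w s'))|)
        ≤ (1 / h s) * ((1 - Φ s) * ((∑ s', P s s' * h s') * (γ * ‖u - w‖))) := by
          refine mul_le_mul_of_nonneg_left (mul_le_mul_of_nonneg_left hsum ?_) ?_
          · linarith [(hΦ s).2]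
          · exact le_of_lt (one_div_pos.mpr (hpos s))
      _ = ((h s - Φ s) / h s) * (γ * ‖u - w‖) := by
          have hS : (1 - Φ s) * (∑ s', P s s' * h s') = h s - Φ s := by linarith [hh s]
          rw [← hS]; ring
      _ ≤ 1 * (γ * ‖u - w‖) := by
          refine mul_le_mul_of_nonneg_right ?_ hnn
          rw [div_le_one (hpos s)]
          linarith [(hΦ s).1]
      _ = γ * ‖u - w‖ := one_mul _
  refine ⟨key, ?_⟩
  have hC : ContractingWith ⟨γ, hγ0⟩ (Tone P r γ Φ h v) := by
    constructor
    · exact_mod_cast hγ1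
    · refine LipschitzWith.of_dist_le_mul fun u w => ?_
      rw [dist_eq_norm, dist_eq_norm]
      exact_mod_cast key u w
  exact ⟨hC.fixedPoint _, hC.fixedPoint_isFixedPt,
    fun y hy => hC.fixedPoint_unique hy⟩
end

section
/- Let S be a nonempty finite set, P a substochastic matrix on S, r : S × S → ℝ, γ ∈ [0,1), and Φ : S → ℝ with 0 ≤ Φ(s) ≤ 1 for all s. Let h : S → ℝ satisfy h(s) = Φ(s) + (1−Φ(s))·∑_{s'} P(s,s')·h(s') and 0 ≤ h(s) < 1 for all s. Define T⁰ : (S → ℝ) → (S → ℝ) by (T⁰ u)(s) = ((1−Φ(s))/(1−h(s)))·∑_{s'} P(s,s')·(1−h(s'))·( r(s,s') + γ·u(s') ). Then ‖T⁰ u − T⁰ w‖_∞ ≤ γ·‖u − w‖_∞ for all u, w : S → ℝ, and T⁰ has a unique fixed point. -/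
/-- The Bellman-type operator `T⁰` for the conditional value function `v^0`:
`(T⁰ u)(s) = ((1-Φ(s))/(1-h(s)))·∑_{s'} P(s,s')·(1-h(s'))·(r(s,s') + γ·u(s'))`. -/
noncomputable def Tzero {S : Type*} [Fintype S] (P : S → S → ℝ) (r : S → S → ℝ)
    (γ : ℝ) (Φ h : S → ℝ) (u : S → ℝ) : S → ℝ :=
  fun s => ((1 - Φ s) / (1 - h s)) *
    ∑ s', P s s' * ((1 - h s') * (r s s' + γ * u s'))

/-- `T⁰` is a `γ`-contraction in the sup norm and has a unique fixed point. -/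
theorem Tzero_contraction {S : Type*} [Fintype S] [Nonempty S]
    (P : S → S → ℝ) (hP0 : ∀ s s', 0 ≤ P s s') (hP1 : ∀ s, ∑ s', P s s' ≤ 1)
    (r : S → S → ℝ) (γ : ℝ) (hγ0 : 0 ≤ γ) (hγ1 : γ < 1)
    (Φ : S → ℝ) (hΦ : ∀ s, 0 ≤ Φ s ∧ Φ s ≤ 1)
    (h : S → ℝ)
    (hh : ∀ s, h s = Φ s + (1 - Φ s) * ∑ s', P s s' * h s')
    (hhb : ∀ s, 0 ≤ h s ∧ h s < 1) :
    (∀ u w : S → ℝ, ‖Tzero P r γ Φ h u - Tzero P r γ Φ h w‖ ≤ γ * ‖u - w‖) ∧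
    (∃! u : S → ℝ, Tzero P r γ Φ h u = u) := by
  have hc0 : ∀ s : S, 0 < 1 - h s := fun s => by linarith [(hhb s).2]
  have key : ∀ s : S, (1 - Φ s) / (1 - h s) * ∑ s', P s s' * (1 - h s') ≤ 1 := by
    intro s
    rw [div_mul_eq_mul_div, div_le_one (hc0 s)]
    have h1 : 1 - h s = (1 - Φ s) * (1 - ∑ s', P s s' * h s') := by
      rw [hh s]; ring
    have h2 : ∑ s', P s s' * (1 - h s') = (∑ s', P s s') - ∑ s', P s s' * h s' := by
      rw [← Finset.sum_sub_distrib]; apply Finset.sum_congr rfl; intros; ring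
    rw [h1, h2]
    have hΦ1 : 0 ≤ 1 - Φ s := by linarith [(hΦ s).2]
    nlinarith [hP1 s]
  have contr : ∀ u w : S → ℝ, ‖Tzero P r γ Φ h u - Tzero P r γ Φ h w‖ ≤ γ * ‖u - w‖ := by
    intro u w
    have hnn : 0 ≤ γ * ‖u - w‖ := mul_nonneg hγ0 (norm_nonneg _)
    rw [pi_norm_le_iff_of_nonneg hnn]
    intro s
    have hdiff : (Tzero P r γ Φ h u - Tzero P r γ Φ h w) s
        = (1 - Φ s) / (1 - h s) * ∑ s', P s s' * ((1 - h s') * (γ * (u s' - w s'))) := by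
      simp only [Pi.sub_apply, Tzero]
      rw [← mul_sub, ← Finset.sum_sub_distrib]
      congr 1
      apply Finset.sum_congr rfl; intros; ring
    rw [hdiff, Real.norm_eq_abs, abs_mul]
    have hc : 0 ≤ (1 - Φ s) / (1 - h s) :=
      div_nonneg (by linarith [(hΦ s).2]) (le_of_lt (hc0 s))
    rw [abs_of_nonneg hc]
    calc (1 - Φ s) / (1 - h s) * |∑ s', P s s' * ((1 - h s') * (γ * (u s' - w s')))|
        ≤ (1 - Φ s) / (1 - h s) * ∑ s', P s s' * (1 - h s') * (γ * ‖u - w‖) := by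
          apply mul_le_mul_of_nonneg_left _ hc
          refine (Finset.abs_sum_le_sum_abs _ _).trans ?_
          apply Finset.sum_le_sum
          intro i _
          rw [abs_mul, abs_mul, abs_mul]
          have hP := hP0 s i
          have hh' : 0 ≤ 1 - h i := le_of_lt (hc0 i)
          rw [abs_of_nonneg hP, abs_of_nonneg hh', abs_of_nonneg hγ0]
          have hb : |u i - w i| ≤ ‖u - w‖ := by
            have := norm_le_pi_norm (u - w) i
            simpa using this
          nlinarith [mul_le_mul_of_nonneg_left hb (mul_nonneg (mul_nonneg hP hh') hγ0)]
      _ = ((1 - Φ s) / (1 - h s) * ∑ s', P s s' * (1 - h s')) * (γ * ‖u - w‖) := by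
          rw [← Finset.sum_mul]; ring
      _ ≤ 1 * (γ * ‖u - w‖) := mul_le_mul_of_nonneg_right (key s) hnn
      _ = γ * ‖u - w‖ := one_mul _
  refine ⟨contr, ?_⟩
  set K : NNReal := ⟨γ, hγ0⟩ with hK
  have hlip : LipschitzWith K (Tzero P r γ Φ h) :=
    LipschitzWith.of_dist_le_mul (fun u w => by
      rw [dist_eq_norm, dist_eq_norm]; exact contr u w)
  have hcw : ContractingWith K (Tzero P r γ Φ h) := ⟨by exact_mod_cast hγ1, hlip⟩
  exact ⟨hcw.fixedPoint _, hcw.fixedPoint_isFixedPt,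
    fun y hy => hcw.fixedPoint_unique hy⟩
end

section
/- Let S be a nonempty finite set, P a substochastic matrix on S, r : S × S → ℝ, γ ∈ [0,1), and Φ : S → ℝ with 0 < Φ(s) < 1 for all s. Let h : S → ℝ satisfy h(s) = Φ(s) + (1−Φ(s))·∑_{s'} P(s,s')·h(s') and Φ(s) ≤ h(s) < 1 for all s. Let v : S → ℝ satisfy the Bellman equation v(s) = ∑_{s'} P(s,s')·( r(s,s') + γ·v(s') ). Let u¹ be the fixed point of the operator (T¹ u)(s) = (1/h(s))·[ v(s)·Φ(s) + (1−Φ(s))·∑_{s'} P(s,s')·h(s')·( r(s,s') + γ·u(s') ) ], and let u⁰ be the fixed point of the operator (T⁰ u)(s) = ((1−Φ(s))/(1−h(s)))·∑_{s'} P(s,s')·(1−h(s'))·( r(s,s') + γ·u(s') ). Then for every s ∈ S: h(s)·u¹(s) + (1−h(s))·u⁰(s) = v(s). -/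
/-- Law of total expectation for the conditional value functions: if `v` solves the
Bellman equation, `h` the hitting-probability recursion, and `u¹`, `u⁰` are the fixed
points of the operators `T¹` and `T⁰`, then `h·u¹ + (1-h)·u⁰ = v`. -/
theorem total_expectation {S : Type*} [Fintype S] [Nonempty S]
    (P : S → S → ℝ) (hP0 : ∀ s s', 0 ≤ P s s') (hP1 : ∀ s, ∑ s', P s s' ≤ 1)
    (r : S → S → ℝ) (γ : ℝ) (hγ0 : 0 ≤ γ) (hγ1 : γ < 1)
    (Φ : S → ℝ) (hΦ : ∀ s, 0 < Φ s ∧ Φ s < 1)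
    (h : S → ℝ)
    (hh : ∀ s, h s = Φ s + (1 - Φ s) * ∑ s', P s s' * h s')
    (hhb : ∀ s, Φ s ≤ h s ∧ h s < 1)
    (v : S → ℝ)
    (hv : ∀ s, v s = ∑ s', P s s' * (r s s' + γ * v s'))
    (u1 : S → ℝ)
    (hu1 : ∀ s, u1 s = (1 / h s) *
      (v s * Φ s + (1 - Φ s) * ∑ s', P s s' * (h s' * (r s s' + γ * u1 s'))))
    (u0 : S → ℝ)
    (hu0 : ∀ s, u0 s = ((1 - Φ s) / (1 - h s)) *
      ∑ s', P s s' * ((1 - h s') * (r s s' + γ * u0 s'))) :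
    ∀ s : S, h s * u1 s + (1 - h s) * u0 s = v s := by
  set e : S → ℝ := fun s => h s * u1 s + (1 - h s) * u0 s - v s with he
  have hpos : ∀ s, 0 < h s := fun s => lt_of_lt_of_le (hΦ s).1 (hhb s).1
  have hlt : ∀ s, 0 < 1 - h s := fun s => by linarith [(hhb s).2]
  have key : ∀ s, e s = γ * (1 - Φ s) * ∑ s', P s s' * e s' := by
    intro s
    have h1 : h s * u1 s =
        v s * Φ s + (1 - Φ s) * ∑ s', P s s' * (h s' * (r s s' + γ * u1 s')) := by
      have hne : h s ≠ 0 := (hpos s).ne'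
      rw [hu1 s]
      generalize (v s * Φ s + (1 - Φ s) * ∑ s', P s s' * (h s' * (r s s' + γ * u1 s'))) = X
      field_simp
    have h0 : (1 - h s) * u0 s =
        (1 - Φ s) * ∑ s', P s s' * ((1 - h s') * (r s s' + γ * u0 s')) := by
      have hne : (1 : ℝ) - h s ≠ 0 := (hlt s).ne'
      rw [hu0 s]
      generalize (∑ s', P s s' * ((1 - h s') * (r s s' + γ * u0 s'))) = Y
      field_simp
    have hsum : (∑ s', P s s' * (h s' * (r s s' + γ * u1 s'))) +
        (∑ s', P s s' * ((1 - h s') * (r s s' + γ * u0 s'))) =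
        (∑ s', P s s' * (r s s' + γ * v s')) + γ * ∑ s', P s s' * e s' := by
      rw [← Finset.sum_add_distrib, Finset.mul_sum, ← Finset.sum_add_distrib]
      apply Finset.sum_congr rfl
      intro s' _
      simp only [he]
      ring
    have hes : e s = v s * Φ s + (1 - Φ s) *
        ((∑ s', P s s' * (h s' * (r s s' + γ * u1 s'))) +
         (∑ s', P s s' * ((1 - h s') * (r s s' + γ * u0 s')))) - v s := by
      simp only [he, h1, h0]; ring
    rw [hes, hsum, ← hv s]
    ring
  have bound : ∀ s, |e s| = 0 := by
    obtain ⟨s0, _, hs0⟩ := Finset.exists_max_image Finset.univ (fun s => |e s|)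
      ⟨Classical.arbitrary S, Finset.mem_univ _⟩
    have hb : ∀ s, |e s| ≤ |e s0| := fun s => hs0 s (Finset.mem_univ s)
    have habs : 0 ≤ |e s0| := abs_nonneg _
    have h1Φ : 0 ≤ 1 - Φ s0 := by linarith [(hΦ s0).2]
    have hΦ1 : 1 - Φ s0 ≤ 1 := by linarith [(hΦ s0).1]
    have hsb : |∑ s', P s0 s' * e s'| ≤ |e s0| := by
      calc |∑ s', P s0 s' * e s'| ≤ ∑ s', |P s0 s' * e s'| := Finset.abs_sum_le_sum_abs _ _
        _ = ∑ s', P s0 s' * |e s'| := by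
            apply Finset.sum_congr rfl; intro s' _
            rw [abs_mul, abs_of_nonneg (hP0 s0 s')]
        _ ≤ ∑ s', P s0 s' * |e s0| := by
            apply Finset.sum_le_sum; intro s' _
            exact mul_le_mul_of_nonneg_left (hb s') (hP0 s0 s')
        _ = (∑ s', P s0 s') * |e s0| := by rw [Finset.sum_mul]
        _ ≤ 1 * |e s0| := mul_le_mul_of_nonneg_right (hP1 s0) habs
        _ = |e s0| := one_mul _
    have : |e s0| ≤ γ * |e s0| := by
      calc |e s0| = |γ * (1 - Φ s0) * ∑ s', P s0 s' * e s'| := by rw [key s0]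
        _ = γ * (1 - Φ s0) * |∑ s', P s0 s' * e s'| := by
            rw [abs_mul, abs_of_nonneg (mul_nonneg hγ0 h1Φ)]
        _ ≤ γ * 1 * |e s0| := by
            apply mul_le_mul (by nlinarith) hsb (abs_nonneg _) (by nlinarith)
        _ = γ * |e s0| := by ring
    have : |e s0| ≤ 0 := by nlinarith
    intro s
    exact le_antisymm (le_trans (hb s) this) (abs_nonneg _)
  intro s
  have := abs_eq_zero.mp (bound s)
  simp only [he] at this
  linarith
end

section
/- Let S be a nonempty finite set, P a substochastic matrix on S, r : S × S → ℝ, γ ∈ [0,1), and Φ : S → ℝ with ε ≤ Φ(s) ≤ 1 for all s, where ε > 0. Let v₀ : S → ℝ and u₀ : S → ℝ be arbitrary, and h₀ : S → ℝ with 0 ≤ h₀(s) ≤ 1 for all s. Define iterates by v_{k+1}(s) = ∑_{s'} P(s,s')·( r(s,s') + γ·v_k(s') ), h_{k+1}(s) = Φ(s) + (1−Φ(s))·∑_{s'} P(s,s')·h_k(s'), and u_{k+1}(s) = (1/h_{k+1}(s))·[ v_k(s)·Φ(s) + (1−Φ(s))·∑_{s'} P(s,s')·h_{k+1}(s')·(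 r(s,s') + γ·u_k(s') ) ]. Then there exist C ≥ 0 and ρ ∈ [0,1) such that for all k, ‖u_k − u¹‖_∞ ≤ C·ρ^k, where u¹ is the unique fixed point of the exact operator (T¹ u)(s) = (1/h(s))·[ v(s)·Φ(s) + (1−Φ(s))·∑_{s'} P(s,s')·h(s')·( r(s,s') + γ·u(s') ) ], v being the unique solution of v(s) = ∑_{s'} P(s,s')·( r(s,s') + γ·v(s') ) and h the unique solution of h(s) = Φ(s) + (1−Φ(s))·∑_{s'} P(s,s')·h(s'). -/
lemma seq_geom_aux (E : ℕ → ℝ) (hE : ∀ k, 0 ≤ E k) (ρ' β c d : ℝ)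
    (hρ0 : 0 ≤ ρ') (hρ1 : ρ' < 1) (hβ0 : 0 ≤ β) (hβ1 : β < 1) (hc : 0 ≤ c) (hd : 0 ≤ d)
    (hrec : ∀ k, E (k+1) ≤ (ρ' + c * β^k) * E k + d * β^k) :
    ∃ C ρ : ℝ, 0 ≤ C ∧ 0 ≤ ρ ∧ ρ < 1 ∧ ∀ k, E k ≤ C * ρ^k := by
  set m := max ρ' β with hm
  have hm0 : 0 ≤ m := le_trans hρ0 (le_max_left _ _)
  have hm1 : m < 1 := max_lt hρ1 hβ1
  set ρ := (1 + m) / 2 with hρ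
  have hρpos : 0 < ρ := by positivity
  have hρlt1 : ρ < 1 := by rw [hρ]; linarith
  have hmltρ : m < ρ := by rw [hρ]; linarith
  have hβleρ : β ≤ ρ := le_trans (le_max_right _ _) hmltρ.le
  set σ := ρ - ρ' with hσ
  have hσpos : 0 < σ := by
    have : ρ' ≤ m := le_max_left _ _
    rw [hσ]; linarith
  obtain ⟨K, hK⟩ : ∃ n : ℕ, β ^ n < σ / (2 * (c + 1)) :=
    exists_pow_lt_of_lt_one (by positivity) hβ1
  have hcβK : c * β ^ K ≤ σ / 2 := by
    have h1 : c * β ^ K ≤ (c + 1) * β ^ K := by nlinarith [pow_nonneg hβ0 K]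
    have h2 : (c + 1) * β ^ K ≤ (c + 1) * (σ / (2 * (c + 1))) := by
      apply mul_le_mul_of_nonneg_left hK.le; linarith
    have h3 : (c + 1) * (σ / (2 * (c + 1))) = σ / 2 := by field_simp
    linarith
  set C₁ := max (E K) (2 * d / σ) with hC₁
  have hC₁0 : 0 ≤ C₁ := le_trans (hE K) (le_max_left _ _)
  have hC₁d : 2 * d / σ ≤ C₁ := le_max_right _ _
  have main : ∀ j, E (K + j) ≤ C₁ * ρ ^ j := by
    intro j
    induction j with
    | zero => simpa using le_trans (le_max_left (E K) (2 * d / σ)) (le_of_eq (by ring))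
    | succ j ih =>
      have hβKj : β ^ (K + j) = β ^ K * β ^ j := pow_add β K j
      have hβjρj : β ^ j ≤ ρ ^ j := pow_le_pow_left₀ hβ0 hβleρ j
      have hβj0 : (0:ℝ) ≤ β ^ j := pow_nonneg hβ0 j
      have hβK1 : β ^ K ≤ 1 := pow_le_one₀ hβ0 hβ1.le
      have hρj0 : (0:ℝ) ≤ ρ ^ j := pow_nonneg hρpos.le j
      have h1 := hrec (K + j)
      rw [show K + j + 1 = K + (j+1) by ring] at h1
      have h2 : (ρ' + c * β ^ (K+j)) * E (K + j) ≤ (ρ' + σ/2) * (C₁ * ρ ^ j) := by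
        apply mul_le_mul
        · rw [hβKj]
          have : c * (β ^ K * β ^ j) ≤ c * β ^ K * 1 := by
            rw [mul_assoc c]
            exact mul_le_mul_of_nonneg_left
              (mul_le_mul_of_nonneg_left (pow_le_one₀ hβ0 hβ1.le) (pow_nonneg hβ0 K)) hc
          nlinarith
        · exact ih
        · exact hE _
        · linarith
      have h3 : d * β ^ (K + j) ≤ d * ρ ^ j := by
        rw [hβKj]
        have : β ^ K * β ^ j ≤ 1 * ρ ^ j := by
          apply mul_le_mul hβK1 hβjρj hβj0 zero_le_one
        nlinarith
      have hdC : d ≤ C₁ * σ / 2 := by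
        rw [div_le_iff₀ hσpos] at hC₁d
        nlinarith
      have hρeq : ρ' + σ = ρ := by rw [hσ]; ring
      have key : (ρ' + σ/2) * C₁ + d ≤ C₁ * ρ := by
        have h5 : C₁ * ρ = (ρ' + σ/2) * C₁ + C₁ * σ / 2 := by rw [← hρeq]; ring
        linarith
      have h4 : (ρ' + σ/2) * (C₁ * ρ ^ j) + d * ρ ^ j ≤ C₁ * ρ ^ (j+1) :=
        calc (ρ' + σ/2) * (C₁ * ρ ^ j) + d * ρ ^ j = ((ρ' + σ/2) * C₁ + d) * ρ ^ j := by ring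
          _ ≤ (C₁ * ρ) * ρ ^ j := mul_le_mul_of_nonneg_right key hρj0
          _ = C₁ * ρ ^ (j+1) := by rw [pow_succ]; ring
      linarith
  set C := ((∑ j ∈ Finset.range (K+1), E j) + C₁) / ρ ^ K with hC
  have hρK : (0:ℝ) < ρ ^ K := pow_pos hρpos K
  have hsum0 : 0 ≤ ∑ j ∈ Finset.range (K+1), E j := Finset.sum_nonneg fun j _ => hE j
  have hC0 : 0 ≤ C := by positivity
  refine ⟨C, ρ, hC0, hρpos.le, hρlt1, fun k => ?_⟩
  rcases le_or_gt k K with hk | hk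
  · have h1 : E k ≤ ∑ j ∈ Finset.range (K+1), E j :=
      Finset.single_le_sum (fun j _ => hE j) (Finset.mem_range.mpr (by omega))
    have h2 : ρ ^ K ≤ ρ ^ k := pow_le_pow_of_le_one hρpos.le hρlt1.le hk
    have h3 : C * ρ ^ K ≤ C * ρ ^ k := mul_le_mul_of_nonneg_left h2 hC0
    have h4 : C * ρ ^ K = (∑ j ∈ Finset.range (K+1), E j) + C₁ := by
      rw [hC]; field_simp
    linarith
  · obtain ⟨j, rfl⟩ : ∃ j, k = K + j := ⟨k - K, by omega⟩
    have h1 := main j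
    have h2 : C₁ * ρ ^ j ≤ C * ρ ^ (K + j) := by
      rw [pow_add, ← mul_assoc]
      apply mul_le_mul_of_nonneg_right _ (pow_nonneg hρpos.le j)
      have h4 : C * ρ ^ K = (∑ j ∈ Finset.range (K+1), E j) + C₁ := by
        rw [hC]; field_simp
      linarith
    linarith


set_option maxHeartbeats 1000000 in
/-- Geometric convergence of the jointly bootstrapped Bellman updates for the
conditional value function `v^1` (part (i) of the paper's Theorem 1). -/
theorem bootstrapped_v1_convergence {S : Type*} [Fintype S] [Nonempty S]
    (P : S → S → ℝ) (hP0 : ∀ s s', 0 ≤ P s s') (hP1 : ∀ s, ∑ s', P s s' ≤ 1)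
    (r : S → S → ℝ) (γ : ℝ) (hγ0 : 0 ≤ γ) (hγ1 : γ < 1)
    (Φ : S → ℝ) (ε : ℝ) (hε : 0 < ε) (hΦ : ∀ s, ε ≤ Φ s ∧ Φ s ≤ 1)
    (v h u : ℕ → S → ℝ)
    (hh0 : ∀ s, 0 ≤ h 0 s ∧ h 0 s ≤ 1)
    (hv : ∀ k s, v (k + 1) s = ∑ s', P s s' * (r s s' + γ * v k s'))
    (hh : ∀ k s, h (k + 1) s = Φ s + (1 - Φ s) * ∑ s', P s s' * h k s')
    (hu : ∀ k s, u (k + 1) s = (1 / h (k + 1) s) *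
      (v k s * Φ s + (1 - Φ s) * ∑ s', P s s' * (h (k + 1) s' * (r s s' + γ * u k s')))) :
    ∀ vstar hstar ustar : S → ℝ,
      (∀ s, vstar s = ∑ s', P s s' * (r s s' + γ * vstar s')) →
      (∀ s, hstar s = Φ s + (1 - Φ s) * ∑ s', P s s' * hstar s') →
      (∀ s, ustar s = (1 / hstar s) *
        (vstar s * Φ s + (1 - Φ s) * ∑ s', P s s' * (hstar s' * (r s s' + γ * ustar s')))) →
      ∃ C ρ : ℝ, 0 ≤ C ∧ 0 ≤ ρ ∧ ρ < 1 ∧ ∀ k : ℕ, ‖u k - ustar‖ ≤ C * ρ ^ k := by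
  intro vstar hstar ustar hvs hhs hus
  obtain ⟨s₀⟩ := (inferInstance : Nonempty S)
  have hε1 : ε ≤ 1 := (hΦ s₀).1.trans (hΦ s₀).2
  have hΦ0 : ∀ s, 0 < Φ s := fun s => lt_of_lt_of_le hε (hΦ s).1
  have hΦ1 : ∀ s, Φ s ≤ 1 := fun s => (hΦ s).2
  -- hstar lower bound
  have hstar_lb : ∀ s, ε ≤ hstar s := by
    obtain ⟨s₁, -, hs₁⟩ := Finset.exists_min_image Finset.univ hstar ⟨s₀, Finset.mem_univ s₀⟩
    have hs₁' : ∀ a, hstar s₁ ≤ hstar a := fun a => hs₁ a (Finset.mem_univ a)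
    have hm0 : 0 ≤ hstar s₁ := by
      by_contra hneg
      push_neg at hneg
      have hsum : hstar s₁ * (∑ s', P s₁ s') ≤ ∑ s', P s₁ s' * hstar s' := by
        rw [Finset.mul_sum]
        exact Finset.sum_le_sum fun s' _ => by
          rw [mul_comm (hstar s₁)]
          exact mul_le_mul_of_nonneg_left (hs₁' s') (hP0 s₁ s')
      have h2 : hstar s₁ ≤ hstar s₁ * (∑ s', P s₁ s') := by
        nlinarith [hP1 s₁, Finset.sum_nonneg (fun s' (_ : s' ∈ Finset.univ) => hP0 s₁ s')]
      have h3 := hhs s₁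
      nlinarith [hΦ0 s₁, hΦ1 s₁]
    have hsum0 : 0 ≤ ∑ s', P s₁ s' * hstar s' :=
      Finset.sum_nonneg fun s' _ => mul_nonneg (hP0 s₁ s') (le_trans hm0 (hs₁' s'))
    intro s
    have h3 := hhs s₁
    have : ε ≤ hstar s₁ := by nlinarith [(hΦ s₁).1, hΦ1 s₁]
    exact le_trans this (hs₁' s)
  have hstar_pos : ∀ s, 0 < hstar s := fun s => lt_of_lt_of_le hε (hstar_lb s)
  -- hstar upper bound
  have hstar_ub : ∀ s, hstar s ≤ 1 := by
    obtain ⟨s₂, -, hs₂⟩ := Finset.exists_max_image Finset.univ hstar ⟨s₀, Finset.mem_univ s₀⟩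
    have hs₂' : ∀ a, hstar a ≤ hstar s₂ := fun a => hs₂ a (Finset.mem_univ a)
    have hsum : ∑ s', P s₂ s' * hstar s' ≤ hstar s₂ * (∑ s', P s₂ s') := by
      rw [Finset.mul_sum]
      exact Finset.sum_le_sum fun s' _ => by
        rw [mul_comm (hstar s₂)]
        exact mul_le_mul_of_nonneg_left (hs₂' s') (hP0 s₂ s')
    have h2 : hstar s₂ * (∑ s', P s₂ s') ≤ hstar s₂ :=
      mul_le_of_le_one_right (hstar_pos s₂).le (hP1 s₂)
    have h3 := hhs s₂
    have hM : hstar s₂ ≤ 1 := by nlinarith [hΦ0 s₂, hΦ1 s₂]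
    exact fun s => le_trans (hs₂' s) hM
  -- h iterate bounds
  have h01 : ∀ k s, 0 ≤ h k s ∧ h k s ≤ 1 := by
    intro k
    induction k with
    | zero => exact hh0
    | succ k ih =>
      intro s
      have hsum0 : 0 ≤ ∑ s', P s s' * h k s' :=
        Finset.sum_nonneg fun s' _ => mul_nonneg (hP0 s s') (ih s').1
      have hsum1 : ∑ s', P s s' * h k s' ≤ 1 := by
        calc ∑ s', P s s' * h k s' ≤ ∑ s', P s s' :=
              Finset.sum_le_sum fun s' _ =>
                mul_le_of_le_one_right (hP0 s s') (ih s').2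
          _ ≤ 1 := hP1 s
      constructor
      · rw [hh]; nlinarith [hΦ0 s, hΦ1 s]
      · rw [hh]; nlinarith [hΦ0 s, hΦ1 s]
  have h_lb : ∀ k s, ε ≤ h (k+1) s := by
    intro k s
    have hsum0 : 0 ≤ ∑ s', P s s' * h k s' :=
      Finset.sum_nonneg fun s' _ => mul_nonneg (hP0 s s') (h01 k s').1
    rw [hh]
    nlinarith [(hΦ s).1, hΦ1 s]
  -- contraction key
  have key : ∀ (s : S) (f g : S → ℝ),
      |(∑ s', P s s' * f s') - ∑ s', P s s' * g s'| ≤ ‖f - g‖ := by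
    intro s f g
    rw [← Finset.sum_sub_distrib]
    calc |∑ s', (P s s' * f s' - P s s' * g s')|
        ≤ ∑ s', |P s s' * f s' - P s s' * g s'| := Finset.abs_sum_le_sum_abs _ _
      _ ≤ ∑ s', P s s' * ‖f - g‖ := by
          apply Finset.sum_le_sum
          intro s' _
          rw [← mul_sub, abs_mul, abs_of_nonneg (hP0 s s')]
          refine mul_le_mul_of_nonneg_left ?_ (hP0 s s')
          simpa [Real.norm_eq_abs] using norm_le_pi_norm (f - g) s'
      _ = (∑ s', P s s') * ‖f - g‖ := by rw [Finset.sum_mul]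
      _ ≤ 1 * ‖f - g‖ := mul_le_mul_of_nonneg_right (hP1 s) (norm_nonneg _)
      _ = ‖f - g‖ := one_mul _
  -- v contraction
  have hvcon : ∀ k, ‖v (k+1) - vstar‖ ≤ γ * ‖v k - vstar‖ := by
    intro k
    rw [pi_norm_le_iff_of_nonneg (by positivity)]
    intro s
    rw [Pi.sub_apply, Real.norm_eq_abs, hv, hvs s]
    have e1 : (fun s' => r s s' + γ * v k s') - (fun s' => r s s' + γ * vstar s')
        = fun s' => γ * (v k s' - vstar s') := by funext s'; simp; ring
    have e2 : ∑ s', P s s' * (r s s' + γ * v k s') - ∑ s', P s s' * (r s s' + γ * vstar s')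
        = ∑ s', P s s' * (γ * (v k s' - vstar s')) - ∑ s', P s s' * 0 := by
      simp [← Finset.sum_sub_distrib]; apply Finset.sum_congr rfl; intros; ring
    rw [e2]
    calc |∑ s', P s s' * (γ * (v k s' - vstar s')) - ∑ s', P s s' * 0|
        ≤ ‖(fun s' => γ * (v k s' - vstar s')) - (fun _ => 0)‖ := key s _ _
      _ ≤ γ * ‖v k - vstar‖ := by
          rw [pi_norm_le_iff_of_nonneg (by positivity)]
          intro s'
          simp only [Pi.sub_apply, Real.norm_eq_abs, sub_zero, abs_mul, abs_of_nonneg hγ0]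
          refine mul_le_mul_of_nonneg_left ?_ hγ0
          simpa [Real.norm_eq_abs] using norm_le_pi_norm (v k - vstar) s'
  -- h contraction
  have hhcon : ∀ k, ‖h (k+1) - hstar‖ ≤ (1-ε) * ‖h k - hstar‖ := by
    intro k
    rw [pi_norm_le_iff_of_nonneg (mul_nonneg (by linarith) (norm_nonneg _))]
    intro s
    rw [Pi.sub_apply, Real.norm_eq_abs, hh, hhs s]
    have e1 : Φ s + (1 - Φ s) * ∑ s', P s s' * h k s'
        - (Φ s + (1 - Φ s) * ∑ s', P s s' * hstar s')
        = (1 - Φ s) * ((∑ s', P s s' * h k s') - ∑ s', P s s' * hstar s') := by ring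
    rw [e1, abs_mul, abs_of_nonneg (by linarith [hΦ1 s] : (0:ℝ) ≤ 1 - Φ s)]
    calc (1 - Φ s) * |(∑ s', P s s' * h k s') - ∑ s', P s s' * hstar s'|
        ≤ (1 - ε) * |(∑ s', P s s' * h k s') - ∑ s', P s s' * hstar s'| := by
          apply mul_le_mul_of_nonneg_right _ (abs_nonneg _)
          linarith [(hΦ s).1]
      _ ≤ (1 - ε) * ‖h k - hstar‖ :=
          mul_le_mul_of_nonneg_left (key s _ _) (by linarith)
  -- geometric decay
  have hvgeo : ∀ k, ‖v k - vstar‖ ≤ ‖v 0 - vstar‖ * γ ^ k := by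
    intro k
    induction k with
    | zero => simp
    | succ k ih =>
      calc ‖v (k+1) - vstar‖ ≤ γ * ‖v k - vstar‖ := hvcon k
        _ ≤ γ * (‖v 0 - vstar‖ * γ ^ k) := mul_le_mul_of_nonneg_left ih hγ0
        _ = ‖v 0 - vstar‖ * γ ^ (k+1) := by ring
  have hhgeo : ∀ k, ‖h k - hstar‖ ≤ ‖h 0 - hstar‖ * (1-ε) ^ k := by
    intro k
    induction k with
    | zero => simp
    | succ k ih =>
      calc ‖h (k+1) - hstar‖ ≤ (1-ε) * ‖h k - hstar‖ := hhcon k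
        _ ≤ (1-ε) * (‖h 0 - hstar‖ * (1-ε) ^ k) :=
            mul_le_mul_of_nonneg_left ih (by linarith)
        _ = ‖h 0 - hstar‖ * (1-ε) ^ (k+1) := by ring
  set β := max γ (1-ε) with hβdef
  have hβ0 : 0 ≤ β := le_trans hγ0 (le_max_left _ _)
  have hβ1 : β < 1 := max_lt hγ1 (by linarith)
  set η0 := ‖v 0 - vstar‖ with hη0def
  set D0 := ‖h 0 - hstar‖ with hD0def
  have hη0 : 0 ≤ η0 := norm_nonneg _
  have hD0 : 0 ≤ D0 := norm_nonneg _
  have hvβ : ∀ k, ‖v k - vstar‖ ≤ η0 * β ^ k := by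
    intro k
    refine le_trans (hvgeo k) (mul_le_mul_of_nonneg_left ?_ hη0)
    exact pow_le_pow_left₀ hγ0 (le_max_left _ _) k
  have hhβ : ∀ k, ‖h (k+1) - hstar‖ ≤ D0 * β ^ k := by
    intro k
    refine le_trans (hhgeo (k+1)) (mul_le_mul_of_nonneg_left ?_ hD0)
    calc (1-ε) ^ (k+1) ≤ (1-ε) ^ k := by
          rw [pow_succ]
          nlinarith [pow_nonneg (show (0:ℝ) ≤ 1-ε by linarith) k]
      _ ≤ β ^ k := pow_le_pow_left₀ (by linarith) (le_max_right _ _) k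
  -- constants
  set U := ‖ustar‖ with hUdef
  set Rm := ‖(fun p : S × S => r p.1 p.2)‖ with hRmdef
  have hU : 0 ≤ U := norm_nonneg _
  have hRm0 : 0 ≤ Rm := norm_nonneg _
  have hrB : ∀ s s', |r s s'| ≤ Rm := fun s s' => by
    simpa [Real.norm_eq_abs] using norm_le_pi_norm (fun p : S × S => r p.1 p.2) (s, s')
  have hustarB : ∀ s, |ustar s| ≤ U := fun s => by
    simpa [Real.norm_eq_abs] using norm_le_pi_norm ustar s
  have h1ε : (0:ℝ) ≤ 1 - ε := by linarith
  -- core recursive estimate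
  have core : ∀ k, ‖u (k+1) - ustar‖ ≤
      (γ*(1-ε) + ((γ*(1-ε)+γ)*D0/ε) * β^k) * ‖u k - ustar‖
        + ((η0 + D0*(Rm + γ*U + U))/ε) * β^k := by
    intro k
    set E := ‖u k - ustar‖ with hEdef
    set D := ‖h (k+1) - hstar‖ with hDdef
    set η := ‖v k - vstar‖ with hηdef
    have hE0 : 0 ≤ E := norm_nonneg _
    have hD0' : 0 ≤ D := norm_nonneg _
    have hη0' : 0 ≤ η := norm_nonneg _
    have hDb : ∀ s, |h (k+1) s - hstar s| ≤ D := fun s => by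
      simpa [Real.norm_eq_abs] using norm_le_pi_norm (h (k+1) - hstar) s
    have hEb : ∀ s, |u k s - ustar s| ≤ E := fun s => by
      simpa [Real.norm_eq_abs] using norm_le_pi_norm (u k - ustar) s
    have hηb : ∀ s, |v k s - vstar s| ≤ η := fun s => by
      simpa [Real.norm_eq_abs] using norm_le_pi_norm (v k - vstar) s
    have pointwise : ∀ s, |u (k+1) s - ustar s| ≤
        γ*(1-ε)*(1+D/ε)*E + (η + D*(Rm + γ*U + γ*E + U))/ε := by
      intro s
      have hA : ε ≤ h (k+1) s := h_lb k s
      have hApos : 0 < h (k+1) s := lt_of_lt_of_le hε hA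
      set SΔ := ∑ s', P s s' * ((h (k+1) s' - hstar s') * (r s s' + γ * u k s')
          + hstar s' * (γ * (u k s' - ustar s'))) with hSΔdef
      have e1 : h (k+1) s * u (k+1) s = v k s * Φ s
          + (1 - Φ s) * ∑ s', P s s' * (h (k+1) s' * (r s s' + γ * u k s')) := by
        rw [hu]; field_simp
      have e2 : hstar s * ustar s = vstar s * Φ s
          + (1 - Φ s) * ∑ s', P s s' * (hstar s' * (r s s' + γ * ustar s')) := by
        conv_lhs => rw [hus s]
        field_simp [(hstar_pos s).ne']
      have e3 : SΔ = (∑ s', P s s' * (h (k+1) s' * (r s s' + γ * u k s')))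
          - ∑ s', P s s' * (hstar s' * (r s s' + γ * ustar s')) := by
        rw [hSΔdef, ← Finset.sum_sub_distrib]
        apply Finset.sum_congr rfl
        intros; ring
      have hnum : h (k+1) s * (u (k+1) s - ustar s) =
          (v k s - vstar s) * Φ s + (1 - Φ s) * SΔ - (h (k+1) s - hstar s) * ustar s := by
        linear_combination e1 - e2 - (1 - Φ s) * e3
      -- bound SΔ
      set SP := ∑ s', P s s' * hstar s' with hSPdef
      have hSP0 : 0 ≤ SP := Finset.sum_nonneg fun s' _ =>
        mul_nonneg (hP0 s s') (hstar_pos s').le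
      have hSPeq : (1 - Φ s) * SP = hstar s - Φ s := by
        have := hhs s; linarith
      have ha0 : (0:ℝ) ≤ D*(Rm + γ*U + γ*E) := by positivity
      have hSΔb : |SΔ| ≤ D*(Rm + γ*U + γ*E) + γ*E*SP := by
        have hterm : ∀ s', |P s s' * ((h (k+1) s' - hstar s') * (r s s' + γ * u k s')
            + hstar s' * (γ * (u k s' - ustar s')))|
            ≤ P s s' * (D*(Rm + γ*U + γ*E)) + P s s' * hstar s' * (γ*E) := by
          intro s'
          rw [abs_mul, abs_of_nonneg (hP0 s s')]
          have b1 : |(h (k+1) s' - hstar s') * (r s s' + γ * u k s')|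
              ≤ D*(Rm + γ*U + γ*E) := by
            rw [abs_mul]
            have hu' : |u k s'| ≤ U + E := by
              have h1 := hEb s'
              have h2 := hustarB s'
              have h3 := abs_sub_abs_le_abs_sub (u k s') (ustar s')
              linarith
            have hr' : |r s s' + γ * u k s'| ≤ Rm + γ*U + γ*E := by
              have h1 := abs_add_le (r s s') (γ * u k s')
              rw [abs_mul, abs_of_nonneg hγ0] at h1
              have h2 := hrB s s'
              nlinarith
            exact mul_le_mul (hDb s') hr' (abs_nonneg _) hD0'
          have b2 : |hstar s' * (γ * (u k s' - ustar s'))| ≤ hstar s' * (γ*E) := by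
            rw [abs_mul, abs_of_nonneg (hstar_pos s').le, abs_mul, abs_of_nonneg hγ0]
            exact mul_le_mul_of_nonneg_left
              (mul_le_mul_of_nonneg_left (hEb s') hγ0) (hstar_pos s').le
          have hsum_le : |(h (k+1) s' - hstar s') * (r s s' + γ * u k s')
              + hstar s' * (γ * (u k s' - ustar s'))|
              ≤ D*(Rm + γ*U + γ*E) + hstar s' * (γ*E) :=
            le_trans (abs_add_le _ _) (add_le_add b1 b2)
          calc P s s' * |(h (k+1) s' - hstar s') * (r s s' + γ * u k s')
              + hstar s' * (γ * (u k s' - ustar s'))|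
              ≤ P s s' * (D*(Rm + γ*U + γ*E) + hstar s' * (γ*E)) :=
                mul_le_mul_of_nonneg_left hsum_le (hP0 s s')
            _ = P s s' * (D*(Rm + γ*U + γ*E)) + P s s' * hstar s' * (γ*E) := by ring
        calc |SΔ| ≤ ∑ s', |P s s' * ((h (k+1) s' - hstar s') * (r s s' + γ * u k s')
              + hstar s' * (γ * (u k s' - ustar s')))| := Finset.abs_sum_le_sum_abs _ _
          _ ≤ ∑ s', (P s s' * (D*(Rm + γ*U + γ*E)) + P s s' * hstar s' * (γ*E)) :=
              Finset.sum_le_sum fun s' _ => hterm s'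
          _ = (∑ s', P s s') * (D*(Rm + γ*U + γ*E)) + SP * (γ*E) := by
              rw [Finset.sum_add_distrib, ← Finset.sum_mul, ← Finset.sum_mul]
          _ ≤ 1 * (D*(Rm + γ*U + γ*E)) + SP * (γ*E) :=
              add_le_add_left (mul_le_mul_of_nonneg_right (hP1 s) ha0) _
          _ = D*(Rm + γ*U + γ*E) + γ*E*SP := by ring
      -- assemble
      have hnumb : h (k+1) s * |u (k+1) s - ustar s| ≤
          η + D*(Rm + γ*U + γ*E) + γ*E*(hstar s - Φ s) + D*U := by
        rw [← abs_of_nonneg hApos.le, ← abs_mul, hnum]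
        have t1 : |(v k s - vstar s) * Φ s| ≤ η := by
          rw [abs_mul, abs_of_nonneg (hΦ0 s).le]
          calc |v k s - vstar s| * Φ s ≤ η * 1 :=
                mul_le_mul (hηb s) (hΦ1 s) (hΦ0 s).le hη0'
            _ = η := mul_one η
        have t2 : |(1 - Φ s) * SΔ| ≤ D*(Rm + γ*U + γ*E) + γ*E*(hstar s - Φ s) := by
          rw [abs_mul, abs_of_nonneg (by linarith [hΦ1 s] : (0:ℝ) ≤ 1 - Φ s)]
          calc (1 - Φ s) * |SΔ| ≤ (1 - Φ s) * (D*(Rm + γ*U + γ*E) + γ*E*SP) :=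
                mul_le_mul_of_nonneg_left hSΔb (by linarith [hΦ1 s])
            _ = (1 - Φ s) * (D*(Rm + γ*U + γ*E)) + γ*E*((1 - Φ s)*SP) := by ring
            _ ≤ 1 * (D*(Rm + γ*U + γ*E)) + γ*E*((1 - Φ s)*SP) :=
                add_le_add_left
                  (mul_le_mul_of_nonneg_right (by linarith [hΦ0 s]) ha0) _
            _ = D*(Rm + γ*U + γ*E) + γ*E*(hstar s - Φ s) := by rw [hSPeq]; ring
        have t3 : |(h (k+1) s - hstar s) * ustar s| ≤ D*U := by
          rw [abs_mul]
          exact mul_le_mul (hDb s) (hustarB s) (abs_nonneg _) hD0'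
        calc |(v k s - vstar s) * Φ s + (1 - Φ s) * SΔ - (h (k+1) s - hstar s) * ustar s|
            ≤ |(v k s - vstar s) * Φ s + (1 - Φ s) * SΔ|
              + |(h (k+1) s - hstar s) * ustar s| := abs_sub _ _
          _ ≤ |(v k s - vstar s) * Φ s| + |(1 - Φ s) * SΔ|
              + |(h (k+1) s - hstar s) * ustar s| := by
                linarith [abs_add_le ((v k s - vstar s) * Φ s) ((1 - Φ s) * SΔ)]
          _ ≤ η + D*(Rm + γ*U + γ*E) + γ*E*(hstar s - Φ s) + D*U := by linarith
      -- the h-star minus Phi bound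
      have ht : (0:ℝ) ≤ D/ε := by positivity
      have f5 : ε * (D/ε) = D := by field_simp
      have hstarΦ : hstar s - Φ s ≤ (1-ε)*(1+D/ε)*(h (k+1) s) := by
        have f1 : ε * hstar s ≤ Φ s :=
          calc ε * hstar s ≤ ε * 1 := mul_le_mul_of_nonneg_left (hstar_ub s) hε.le
            _ = ε := mul_one ε
            _ ≤ Φ s := (hΦ s).1
        have f2 : hstar s ≤ h (k+1) s + D := by
          have h1 := (abs_le.mp (hDb s)).1
          linarith
        have g1 : (1-ε)*hstar s ≤ (1-ε)*(h (k+1) s + D) :=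
          mul_le_mul_of_nonneg_left f2 h1ε
        have g2 : (1-ε)*(D/ε)*ε ≤ (1-ε)*(D/ε)*h (k+1) s :=
          mul_le_mul_of_nonneg_left hA (mul_nonneg h1ε ht)
        have g3 : (1-ε)*(D/ε)*ε = (1-ε)*D := by
          rw [mul_assoc, mul_comm (D/ε) ε, f5]
        have g4 : (1-ε)*(1+D/ε)*(h (k+1) s)
            = (1-ε)*h (k+1) s + (1-ε)*(D/ε)*h (k+1) s := by ring
        linarith
      -- divide
      have final : |u (k+1) s - ustar s| ≤
          (η + D*(Rm + γ*U + γ*E) + D*U)/ε + γ*E*(1-ε)*(1+D/ε) := by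
        have hB1 : (0:ℝ) ≤ η + D*(Rm + γ*U + γ*E) + D*U := by positivity
        rcases le_total (|u (k+1) s - ustar s|) (γ*E*(1-ε)*(1+D/ε)) with hle | hle
        · have hp : (0:ℝ) ≤ (η + D*(Rm + γ*U + γ*E) + D*U)/ε := by positivity
          linarith
        · have c2h : γ*E*(hstar s - Φ s) ≤ γ*E*(1-ε)*(1+D/ε) * h (k+1) s := by
            have h1 := mul_le_mul_of_nonneg_left hstarΦ (mul_nonneg hγ0 hE0)
            have h2 : γ*E*((1-ε)*(1+D/ε)*(h (k+1) s))
                = γ*E*(1-ε)*(1+D/ε) * h (k+1) s := by ring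
            linarith
          have step : (|u (k+1) s - ustar s| - γ*E*(1-ε)*(1+D/ε)) * h (k+1) s
              ≤ η + D*(Rm + γ*U + γ*E) + D*U := by
            have expand : (|u (k+1) s - ustar s| - γ*E*(1-ε)*(1+D/ε)) * h (k+1) s
                = h (k+1) s * |u (k+1) s - ustar s|
                  - γ*E*(1-ε)*(1+D/ε) * h (k+1) s := by ring
            linarith [hnumb]
          have step2 : (|u (k+1) s - ustar s| - γ*E*(1-ε)*(1+D/ε)) * ε
              ≤ η + D*(Rm + γ*U + γ*E) + D*U := by
            have h0 : 0 ≤ |u (k+1) s - ustar s| - γ*E*(1-ε)*(1+D/ε) := by linarith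
            have h1 := mul_le_mul_of_nonneg_left hA h0
            have h2 : (|u (k+1) s - ustar s| - γ*E*(1-ε)*(1+D/ε)) * ε
                = (|u (k+1) s - ustar s| - γ*E*(1-ε)*(1+D/ε)) * ε := rfl
            calc (|u (k+1) s - ustar s| - γ*E*(1-ε)*(1+D/ε)) * ε
                ≤ (|u (k+1) s - ustar s| - γ*E*(1-ε)*(1+D/ε)) * h (k+1) s := by
                  exact mul_le_mul_of_nonneg_left hA h0
              _ ≤ η + D*(Rm + γ*U + γ*E) + D*U := step
          have h3 : |u (k+1) s - ustar s| - γ*E*(1-ε)*(1+D/ε)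
              ≤ (η + D*(Rm + γ*U + γ*E) + D*U)/ε := (le_div_iff₀ hε).mpr step2
          linarith
      calc |u (k+1) s - ustar s|
          ≤ (η + D*(Rm + γ*U + γ*E) + D*U)/ε + γ*E*(1-ε)*(1+D/ε) := final
        _ = γ*(1-ε)*(1+D/ε)*E + (η + D*(Rm + γ*U + γ*E + U))/ε := by ring
    -- norm bound
    have normb : ‖u (k+1) - ustar‖ ≤
        γ*(1-ε)*(1+D/ε)*E + (η + D*(Rm + γ*U + γ*E + U))/ε := by
      have hrhs : (0:ℝ) ≤ γ*(1-ε)*(1+D/ε)*E + (η + D*(Rm + γ*U + γ*E + U))/ε := by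
        have : (0:ℝ) ≤ γ*(1-ε)*(1+D/ε)*E :=
          mul_nonneg (mul_nonneg (mul_nonneg hγ0 h1ε) (by positivity)) hE0
        have : (0:ℝ) ≤ (η + D*(Rm + γ*U + γ*E + U))/ε := by positivity
        linarith [mul_nonneg (mul_nonneg (mul_nonneg hγ0 h1ε)
          (by positivity : (0:ℝ) ≤ 1+D/ε)) hE0]
      rw [pi_norm_le_iff_of_nonneg hrhs]
      intro s
      rw [Pi.sub_apply, Real.norm_eq_abs]
      exact pointwise s
    -- replace D, η by geometric bounds
    have hDk : D ≤ D0 * β^k := hhβ k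
    have hηk : η ≤ η0 * β^k := hvβ k
    have hβk : (0:ℝ) ≤ β^k := pow_nonneg hβ0 k
    have mono : γ*(1-ε)*(1+D/ε)*E + (η + D*(Rm + γ*U + γ*E + U))/ε ≤
        (γ*(1-ε) + ((γ*(1-ε)+γ)*D0/ε) * β^k) * E + ((η0 + D0*(Rm + γ*U + U))/ε) * β^k := by
      have expand : (γ*(1-ε) + ((γ*(1-ε)+γ)*D0/ε) * β^k) * E
          + ((η0 + D0*(Rm + γ*U + U))/ε) * β^k
          = γ*(1-ε)*(1+(D0*β^k)/ε)*E + (η0*β^k + (D0*β^k)*(Rm + γ*U + γ*E + U))/ε := by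
        field_simp
        ring
      rw [expand]
      have hcoef : (0:ℝ) ≤ Rm + γ*U + γ*E + U := by positivity
      have key1 : γ*(1-ε)*(1+D/ε)*E ≤ γ*(1-ε)*(1+(D0*β^k)/ε)*E := by
        apply mul_le_mul_of_nonneg_right _ hE0
        apply mul_le_mul_of_nonneg_left _ (mul_nonneg hγ0 h1ε)
        have : D/ε ≤ (D0*β^k)/ε := (div_le_div_iff_of_pos_right hε).mpr hDk
        linarith
      have key2 : (η + D*(Rm + γ*U + γ*E + U))/ε
          ≤ (η0*β^k + (D0*β^k)*(Rm + γ*U + γ*E + U))/ε := by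
        apply (div_le_div_iff_of_pos_right hε).mpr
        have := mul_le_mul_of_nonneg_right hDk hcoef
        linarith
      linarith
    exact le_trans normb mono
  -- apply the abstract sequence lemma
  have hρ'0 : 0 ≤ γ*(1-ε) := mul_nonneg hγ0 h1ε
  have hρ'1 : γ*(1-ε) < 1 := by nlinarith
  have hc0 : 0 ≤ (γ*(1-ε)+γ)*D0/ε :=
    div_nonneg (mul_nonneg (by linarith) hD0) hε.le
  have hd0 : 0 ≤ (η0 + D0*(Rm + γ*U + U))/ε := by
    have h1 : 0 ≤ γ*U := mul_nonneg hγ0 hU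
    have h2 : 0 ≤ Rm + γ*U + U := by linarith
    exact div_nonneg (by nlinarith [mul_nonneg hD0 h2]) hε.le
  obtain ⟨C, ρ, hC0, hρ0, hρ1, hbound⟩ :=
    seq_geom_aux (fun k => ‖u k - ustar‖) (fun k => norm_nonneg _)
      (γ*(1-ε)) β ((γ*(1-ε)+γ)*D0/ε) ((η0 + D0*(Rm + γ*U + U))/ε)
      hρ'0 hρ'1 hβ0 hβ1 hc0 hd0 core
  exact ⟨C, ρ, hC0, hρ0, hρ1, hbound⟩
end

section
/- Let S be a nonempty finite set and P : S × S → ℝ with P(s,s') ≥ 0 and ∑_{s'} P(s,s') ≤ 1−δ for all s, where δ > 0. Let r : S × S → ℝ, γ ∈ [0,1), and Φ : S → ℝ with ε ≤ Φ(s) ≤ 1−ε for all s, where ε > 0. Let u₀ : S → ℝ be arbitrary and h₀ : S → ℝ with Φ(s) ≤ h₀(s) ≤ 1−δ·(1−Φ(s)) for all s. Define iterates by h_{k+1}(s) = Φ(s) + (1−Φ(s))·∑_{s'} P(s,s')·h_k(s') and u_{k+1}(s) = ((1−Φ(s))/(1−h_{k+1}(s)))·∑_{s'} P(s,s')·(1−h_{k+1}(s'))·(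 r(s,s') + γ·u_k(s') ). Then there exist C ≥ 0 and ρ ∈ [0,1) such that for all k, ‖u_k − u⁰‖_∞ ≤ C·ρ^k, where u⁰ is the unique fixed point of the exact operator (T⁰ u)(s) = ((1−Φ(s))/(1−h(s)))·∑_{s'} P(s,s')·(1−h(s'))·( r(s,s') + γ·u(s') ), h being the unique solution of h(s) = Φ(s) + (1−Φ(s))·∑_{s'} P(s,s')·h(s'). -/
open Finset Filter
set_option maxHeartbeats 1600000
open Finset Filter

private lemma aux_nat_mul_pow_le {q : ℝ} (hq0 : 0 < q) (hq1 : q < 1) (k : ℕ) :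
    (k : ℝ) * q ^ k ≤ q / (1 - q) := by
  have ht : 0 < 1/q - 1 := by
    rw [lt_sub_iff_add_lt, zero_add, lt_div_iff₀ hq0, one_mul]; exact hq1
  have hb := one_add_mul_le_pow (a := 1/q - 1) (by linarith) k
  have hqk : 0 < q ^ k := pow_pos hq0 k
  have h1 : (1 + (1/q - 1)) ^ k = (1/q) ^ k := by ring_nf
  have h2 : (1/q : ℝ) ^ k * q ^ k = 1 := by
    rw [← mul_pow]; rw [one_div_mul_cancel (ne_of_gt hq0), one_pow]
  have h3 : (1 + (k : ℝ) * (1/q - 1)) * q ^ k ≤ 1 := by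
    calc (1 + (k : ℝ) * (1/q - 1)) * q ^ k ≤ (1/q) ^ k * q ^ k := by
          apply mul_le_mul_of_nonneg_right _ (le_of_lt hqk); rw [← h1]; exact hb
      _ = 1 := h2
  have h4 : (k : ℝ) * (1/q - 1) * q ^ k ≤ 1 := by nlinarith
  rw [le_div_iff₀ (by linarith : (0:ℝ) < 1 - q)]
  have h6 : (k:ℝ) * q ^ k * (1-q) = q * ((k:ℝ) * (1/q - 1) * q ^ k) := by
    field_simp
  rw [h6]
  calc q * ((k:ℝ) * (1/q - 1) * q ^ k) ≤ q * 1 := mul_le_mul_of_nonneg_left h4 (le_of_lt hq0)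
    _ = q := mul_one q

set_option maxHeartbeats 1000000 in
private lemma aux_geom_rec (e : ℕ → ℝ) (γ q B D : ℝ) (he : ∀ k, 0 ≤ e k)
    (hγ0 : 0 ≤ γ) (hγ1 : γ < 1) (hq0 : 0 ≤ q) (hq1 : q < 1) (hB : 0 ≤ B) (hD : 0 ≤ D)
    (hrec : ∀ k, e (k + 1) ≤ γ * (1 + B * q ^ k) * e k + D * q ^ k) :
    ∃ C ρ : ℝ, 0 ≤ C ∧ 0 ≤ ρ ∧ ρ < 1 ∧ ∀ k : ℕ, e k ≤ C * ρ ^ k := by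
  set m : ℝ := max (max γ q) (1/2) with hm
  have hm0 : (1/2 : ℝ) ≤ m := le_max_right _ _
  have hmγ : γ ≤ m := le_trans (le_max_left _ _) (le_max_left _ _)
  have hmq : q ≤ m := le_trans (le_max_right γ q) (le_max_left _ _)
  have hm1 : m < 1 := max_lt (max_lt hγ1 hq1) (by norm_num)
  have hmpos : 0 < m := lt_of_lt_of_le (by norm_num) hm0
  clear_value m
  set Pk : ℕ → ℝ := fun k => ∏ j ∈ range k, (1 + B * q ^ j) with hPk
  have hterm : ∀ j, (1:ℝ) ≤ 1 + B * q ^ j := fun j => by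
    nlinarith [pow_nonneg hq0 j, mul_nonneg hB (pow_nonneg hq0 j)]
  have hPprod : ∀ k, Pk (k+1) = Pk k * (1 + B * q ^ k) := fun k => prod_range_succ _ _
  have hPk1 : ∀ k, (1:ℝ) ≤ Pk k := by
    intro k
    induction k with
    | zero => simp [hPk]
    | succ k ih => rw [hPprod k]; nlinarith [hterm k]
  have hPkpos : ∀ k, (0:ℝ) < Pk k := fun k => lt_of_lt_of_le one_pos (hPk1 k)
  have hPkbd : ∀ k, Pk k ≤ Real.exp (B / (1 - q)) := by
    intro k
    have h1 : Pk k ≤ ∏ j ∈ range k, Real.exp (B * q ^ j) := by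
      apply Finset.prod_le_prod
      · intro j _; positivity
      · intro j _; have := Real.add_one_le_exp (B * q ^ j); linarith
    have h2 : ∏ j ∈ range k, Real.exp (B * q ^ j) = Real.exp (∑ j ∈ range k, B * q ^ j) :=
      (Real.exp_sum _ _).symm
    have h1q : (0:ℝ) < 1 - q := by linarith
    have h3 : ∑ j ∈ range k, B * q ^ j ≤ B / (1 - q) := by
      rw [← Finset.mul_sum, div_eq_mul_inv]
      apply mul_le_mul_of_nonneg_left _ hB
      rw [geom_sum_eq (ne_of_lt hq1) k]
      have heq : (q ^ k - 1)/(q - 1) = (1 - q ^ k)/(1 - q) := by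
        rw [div_eq_div_iff (by linarith) (by linarith)]; ring
      rw [heq, inv_eq_one_div, div_le_div_iff₀ h1q h1q]
      nlinarith [pow_nonneg hq0 k]
    calc Pk k ≤ Real.exp (∑ j ∈ range k, B * q ^ j) := h2 ▸ h1
      _ ≤ Real.exp (B / (1-q)) := Real.exp_le_exp.mpr h3
  -- main induction
  have hmain : ∀ k, e k ≤ Pk k * (e 0 + 2 * D * k) * m ^ k := by
    intro k
    induction k with
    | zero => simp [hPk]
    | succ k ih =>
      have hmk : (0:ℝ) ≤ m ^ k := pow_nonneg (le_of_lt hmpos) k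
      have hknn : (0:ℝ) ≤ (k:ℝ) := Nat.cast_nonneg k
      have hA : (0:ℝ) ≤ e 0 + 2*D*(k:ℝ) := by nlinarith [he 0]
      have hPknn : (0:ℝ) ≤ Pk k := le_of_lt (hPkpos k)
      have htk := hterm k
      have c1 : γ * (1 + B * q ^ k) * e k ≤ (1 + B * q ^ k) * γ * (Pk k * (e 0 + 2*D*k) * m ^ k) := by
        have h := mul_le_mul_of_nonneg_left ih (mul_nonneg (by linarith : (0:ℝ) ≤ 1 + B*q^k) hγ0)
        nlinarith [he k]
      have c2 : γ * m ^ k ≤ m ^ (k+1) := by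
        rw [pow_succ]
        calc γ * m ^ k ≤ m * m ^ k := mul_le_mul_of_nonneg_right hmγ hmk
          _ = m ^ k * m := by ring
      have hCnn : (0:ℝ) ≤ (1 + B * q ^ k) * Pk k * (e 0 + 2*D*k) := by
        apply mul_nonneg (mul_nonneg (by linarith) hPknn) hA
      have c3 : (1 + B * q ^ k) * γ * (Pk k * (e 0 + 2*D*k) * m ^ k)
          ≤ (1 + B * q ^ k) * Pk k * (e 0 + 2*D*k) * m ^ (k+1) := by
        have h := mul_le_mul_of_nonneg_left c2 hCnn
        calc (1 + B * q ^ k) * γ * (Pk k * (e 0 + 2*D*k) * m ^ k)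
            = (1 + B * q ^ k) * Pk k * (e 0 + 2*D*k) * (γ * m ^ k) := by ring
          _ ≤ (1 + B * q ^ k) * Pk k * (e 0 + 2*D*k) * m ^ (k+1) := h
      have hmk1 : (0:ℝ) ≤ m ^ (k+1) := pow_nonneg (le_of_lt hmpos) (k+1)
      have c4 : D * q ^ k ≤ (1 + B * q ^ k) * Pk k * (2*D) * m ^ (k+1) := by
        have s1 : q ^ k ≤ m ^ k := pow_le_pow_left₀ hq0 hmq k
        have s2 : D * q ^ k ≤ D * m ^ k := mul_le_mul_of_nonneg_left s1 hD
        have s3 : m ^ k ≤ 2 * m ^ (k+1) := by rw [pow_succ]; nlinarith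
        have s4 : D * m ^ k ≤ 2 * D * m ^ (k+1) := by
          calc D * m ^ k ≤ D * (2 * m ^ (k+1)) := mul_le_mul_of_nonneg_left s3 hD
            _ = 2 * D * m ^ (k+1) := by ring
        have s5 : (1:ℝ) ≤ (1 + B * q ^ k) * Pk k := by nlinarith [hPk1 k]
        have s6 : (0:ℝ) ≤ 2 * D * m ^ (k+1) := by positivity
        calc D * q ^ k ≤ D * m ^ k := s2
          _ ≤ 2 * D * m ^ (k+1) := s4
          _ ≤ ((1 + B * q ^ k) * Pk k) * (2 * D * m ^ (k+1)) := le_mul_of_one_le_left s6 s5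
          _ = (1 + B * q ^ k) * Pk k * (2*D) * m ^ (k+1) := by ring
      have key : e (k+1) ≤ (1 + B * q ^ k) * Pk k * (e 0 + 2*D*k) * m ^ (k+1)
          + (1 + B * q ^ k) * Pk k * (2*D) * m ^ (k+1) := by
        have := hrec k
        linarith
      rw [hPprod k]
      push_cast
      calc e (k+1) ≤ (1 + B * q ^ k) * Pk k * (e 0 + 2*D*k) * m ^ (k+1)
            + (1 + B * q ^ k) * Pk k * (2*D) * m ^ (k+1) := key
        _ = Pk k * (1 + B * q ^ k) * (e 0 + 2 * D * ((k:ℝ)+1)) * m ^ (k+1) := by ring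
  clear hrec
  clear_value Pk
  -- convert to clean geometric bound
  set ρ : ℝ := (1 + m)/2 with hρ
  have hρm : m < ρ := by rw [hρ]; linarith
  have hρ1 : ρ < 1 := by rw [hρ]; linarith
  have hρ0 : 0 < ρ := lt_trans hmpos hρm
  set q' : ℝ := m / ρ with hq'
  have hq'0 : 0 < q' := div_pos hmpos hρ0
  have hq'1 : q' < 1 := (div_lt_one hρ0).mpr hρm
  set K : ℝ := q' / (1 - q') with hKdef
  have hK0 : 0 ≤ K := le_of_lt (div_pos hq'0 (by linarith))
  have hmρ : m = q' * ρ := by rw [hq', div_mul_cancel₀ m (ne_of_gt hρ0)]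
  have hkq'all : ∀ k : ℕ, (k:ℝ) * q' ^ k ≤ K := fun k => aux_nat_mul_pow_le hq'0 hq'1 k
  clear_value ρ q' K
  have hC0 : 0 ≤ Real.exp (B / (1-q)) * (e 0 + 2 * D * K) := by
    apply mul_nonneg (le_of_lt (Real.exp_pos _))
    have := he 0
    nlinarith
  refine ⟨Real.exp (B / (1-q)) * (e 0 + 2 * D * K), ρ, hC0, le_of_lt hρ0, hρ1, ?_⟩
  intro k
  have h1 := hmain k
  have hmk : (0:ℝ) ≤ m ^ k := pow_nonneg (le_of_lt hmpos) k
  have hρk : (0:ℝ) ≤ ρ ^ k := pow_nonneg (le_of_lt hρ0) k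
  have hknn : (0:ℝ) ≤ (k:ℝ) := Nat.cast_nonneg k
  have hAk : (0:ℝ) ≤ e 0 + 2 * D * k := by have := he 0; have := mul_nonneg (mul_nonneg (by norm_num : (0:ℝ) ≤ 2) hD) hknn; linarith
  have h2 : Pk k * (e 0 + 2 * D * k) * m ^ k ≤ Real.exp (B / (1-q)) * ((e 0 + 2 * D * k) * m ^ k) := by
    have := mul_le_mul_of_nonneg_right (mul_le_mul_of_nonneg_right (hPkbd k) hAk) hmk
    calc Pk k * (e 0 + 2 * D * k) * m ^ k ≤ Real.exp (B / (1-q)) * (e 0 + 2 * D * k) * m ^ k := this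
      _ = Real.exp (B / (1-q)) * ((e 0 + 2 * D * k) * m ^ k) := by ring
  have h3 : (e 0 + 2 * D * k) * m ^ k ≤ (e 0 + 2 * D * K) * ρ ^ k := by
    have hmk2 : m ^ k = q' ^ k * ρ ^ k := by rw [hmρ, mul_pow]
    have hq'k0 : (0:ℝ) ≤ q' ^ k := pow_nonneg (le_of_lt hq'0) k
    have hq'k : q' ^ k ≤ 1 := pow_le_one₀ (le_of_lt hq'0) (le_of_lt hq'1)
    have hkq' : (k:ℝ) * q' ^ k ≤ K := hkq'all k
    have he0 := he 0
    rw [hmk2]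
    have heq : (e 0 + 2 * D * k) * (q' ^ k * ρ ^ k)
        = (e 0 * q' ^ k + 2 * D * ((k:ℝ) * q' ^ k)) * ρ ^ k := by ring
    rw [heq]
    apply mul_le_mul_of_nonneg_right _ hρk
    have : e 0 * q' ^ k ≤ e 0 := by nlinarith
    nlinarith
  calc e k ≤ Pk k * (e 0 + 2 * D * k) * m ^ k := h1
    _ ≤ Real.exp (B / (1-q)) * ((e 0 + 2 * D * k) * m ^ k) := h2
    _ ≤ Real.exp (B / (1-q)) * ((e 0 + 2 * D * K) * ρ ^ k) :=
        mul_le_mul_of_nonneg_left h3 (le_of_lt (Real.exp_pos _))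
    _ = Real.exp (B / (1-q)) * (e 0 + 2 * D * K) * ρ ^ k := by ring



/-- Geometric convergence of the jointly bootstrapped Bellman updates for the
conditional value function `v^0` (part (i) of the paper's Theorem 1). -/
theorem bootstrapped_v0_convergence {S : Type*} [Fintype S] [Nonempty S]
    (P : S → S → ℝ) (δ : ℝ) (hδ : 0 < δ)
    (hP0 : ∀ s s', 0 ≤ P s s') (hP1 : ∀ s, ∑ s', P s s' ≤ 1 - δ)
    (r : S → S → ℝ) (γ : ℝ) (hγ0 : 0 ≤ γ) (hγ1 : γ < 1)
    (Φ : S → ℝ) (ε : ℝ) (hε : 0 < ε) (hΦ : ∀ s, ε ≤ Φ s ∧ Φ s ≤ 1 - ε)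
    (h u : ℕ → S → ℝ)
    (hh0 : ∀ s, Φ s ≤ h 0 s ∧ h 0 s ≤ 1 - δ * (1 - Φ s))
    (hh : ∀ k s, h (k + 1) s = Φ s + (1 - Φ s) * ∑ s', P s s' * h k s')
    (hu : ∀ k s, u (k + 1) s = ((1 - Φ s) / (1 - h (k + 1) s)) *
      ∑ s', P s s' * ((1 - h (k + 1) s') * (r s s' + γ * u k s'))) :
    ∀ hstar ustar : S → ℝ,
      (∀ s, hstar s = Φ s + (1 - Φ s) * ∑ s', P s s' * hstar s') →
      (∀ s, ustar s = ((1 - Φ s) / (1 - hstar s)) *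
        ∑ s', P s s' * ((1 - hstar s') * (r s s' + γ * ustar s'))) →
      ∃ C ρ : ℝ, 0 ≤ C ∧ 0 ≤ ρ ∧ ρ < 1 ∧ ∀ k : ℕ, ‖u k - ustar‖ ≤ C * ρ ^ k := by
  intro hstar ustar hfix ufix
  have hΦ1 : ∀ s, ε ≤ Φ s := fun s => (hΦ s).1
  have hΦ2 : ∀ s, Φ s ≤ 1 - ε := fun s => (hΦ s).2
  obtain ⟨s0⟩ := (inferInstance : Nonempty S)
  have hε2 : ε ≤ 1/2 := by linarith [hΦ1 s0, hΦ2 s0]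
  have hAnn : ∀ s, (0:ℝ) ≤ ∑ s', P s s' := fun s =>
    Finset.sum_nonneg fun s' _ => hP0 s s'
  have hδ1 : δ ≤ 1 := by linarith [hAnn s0, hP1 s0]
  set q : ℝ := (1-ε)*(1-δ) with hqdef
  have hq0 : 0 ≤ q := by rw [hqdef]; exact mul_nonneg (by linarith) (by linarith)
  have hq1 : q < 1 := by
    rw [hqdef]
    have e := mul_nonneg (le_of_lt hε) (by linarith : (0:ℝ) ≤ 1 - δ)
    have e2 : (1-ε)*(1-δ) = 1 - δ - ε*(1-δ) := by ring
    linarith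
  clear_value q
  -- sum bound helpers
  have hsum : ∀ (x : S → ℝ) (M : ℝ), 0 ≤ M → (∀ s', |x s'| ≤ M) →
      ∀ s, |∑ s', P s s' * x s'| ≤ (1-δ) * M := by
    intro x M hM hx s
    calc |∑ s', P s s' * x s'| ≤ ∑ s', |P s s' * x s'| := Finset.abs_sum_le_sum_abs _ _
      _ = ∑ s', P s s' * |x s'| := by
          apply Finset.sum_congr rfl; intro s' _
          rw [abs_mul, abs_of_nonneg (hP0 s s')]
      _ ≤ ∑ s', P s s' * M :=
          Finset.sum_le_sum (fun s' _ => mul_le_mul_of_nonneg_left (hx s') (hP0 s s'))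
      _ = (∑ s', P s s') * M := by rw [← Finset.sum_mul]
      _ ≤ (1-δ) * M := mul_le_mul_of_nonneg_right (hP1 s) hM
  have hsumpos : ∀ (x : S → ℝ), (∀ s', 0 ≤ x s') → ∀ s, 0 ≤ ∑ s', P s s' * x s' :=
    fun x hx s => Finset.sum_nonneg fun s' _ => mul_nonneg (hP0 s s') (hx s')
  have hsumub : ∀ (x : S → ℝ), (∀ s', x s' ≤ 1) → ∀ s, ∑ s', P s s' * x s' ≤ 1 - δ := by
    intro x hx s
    calc ∑ s', P s s' * x s' ≤ ∑ s', P s s' * 1 :=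
          Finset.sum_le_sum (fun s' _ => mul_le_mul_of_nonneg_left (hx s') (hP0 s s'))
      _ = ∑ s', P s s' := by simp
      _ ≤ 1 - δ := hP1 s
  have hsum2 : ∀ (w x : S → ℝ) (M : ℝ), (∀ s', 0 ≤ w s') → 0 ≤ M → (∀ s', |x s'| ≤ M) →
      ∀ s, |∑ s', P s s' * (w s' * x s')| ≤ (∑ s', P s s' * w s') * M := by
    intro w x M hw hM hx s
    calc |∑ s', P s s' * (w s' * x s')| ≤ ∑ s', |P s s' * (w s' * x s')| :=
          Finset.abs_sum_le_sum_abs _ _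
      _ = ∑ s', (P s s' * w s') * |x s'| := by
          apply Finset.sum_congr rfl; intro s' _
          rw [abs_mul, abs_mul, abs_of_nonneg (hP0 s s'), abs_of_nonneg (hw s'), mul_assoc]
      _ ≤ ∑ s', (P s s' * w s') * M :=
          Finset.sum_le_sum (fun s' _ =>
            mul_le_mul_of_nonneg_left (hx s') (mul_nonneg (hP0 s s') (hw s')))
      _ = (∑ s', P s s' * w s') * M := by rw [← Finset.sum_mul]
  have hsplit : ∀ (f g : S → ℝ) (s : S),
      ∑ s', P s s' * (f s' - g s') = ∑ s', P s s' * f s' - ∑ s', P s s' * g s' := by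
    intro f g s
    rw [← Finset.sum_sub_distrib]
    apply Finset.sum_congr rfl; intros; ring
  -- bounds on h k
  have hbnd : ∀ k s, Φ s ≤ h k s ∧ h k s ≤ 1 - δ * (1 - Φ s) := by
    intro k
    induction k with
    | zero => exact hh0
    | succ k ih =>
      intro s
      have h01 : ∀ s', 0 ≤ h k s' ∧ h k s' ≤ 1 := by
        intro s'
        constructor
        · linarith [(ih s').1, hΦ1 s']
        · have e := mul_nonneg (le_of_lt hδ) (by linarith [hΦ2 s'] : (0:ℝ) ≤ 1 - Φ s')
          linarith [(ih s').2]
      have hs0 : 0 ≤ ∑ s', P s s' * h k s' := hsumpos _ (fun s' => (h01 s').1) s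
      have hs1 : ∑ s', P s s' * h k s' ≤ 1 - δ := hsumub _ (fun s' => (h01 s').2) s
      have haΦ : (0:ℝ) < 1 - Φ s := by linarith [hΦ2 s]
      rw [hh k s]
      constructor
      · have e := mul_nonneg (le_of_lt haΦ) hs0
        linarith
      · have e := mul_le_mul_of_nonneg_left hs1 (le_of_lt haΦ)
        have e2 : (1 - Φ s)*(1-δ) = 1 - δ - Φ s + δ * Φ s := by ring
        have e3 : δ * (1 - Φ s) = δ - δ * Φ s := by ring
        linarith
  -- geometric convergence of h to hstar
  set η : ℝ := ‖h 0 - hstar‖ with hηdef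
  have hη0 : 0 ≤ η := norm_nonneg _
  clear_value η
  have hcontr : ∀ k s, |h k s - hstar s| ≤ η * q ^ k := by
    intro k
    induction k with
    | zero =>
      intro s
      have h1 := norm_le_pi_norm (h 0 - hstar) s
      rw [Pi.sub_apply, Real.norm_eq_abs] at h1
      simpa [hηdef] using h1
    | succ k ih =>
      intro s
      have hqk : (0:ℝ) ≤ q ^ k := pow_nonneg hq0 k
      have hMk : (0:ℝ) ≤ η * q ^ k := mul_nonneg hη0 hqk
      have hd := hsum (fun s' => h k s' - hstar s') (η * q ^ k) hMk ih s
      have haΦ : (0:ℝ) ≤ 1 - Φ s := by linarith [hΦ2 s]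
      have heq : h (k+1) s - hstar s = (1 - Φ s) * ∑ s', P s s' * (h k s' - hstar s') := by
        rw [hh k s, hfix s, hsplit]
        ring
      calc |h (k+1) s - hstar s| = (1 - Φ s) * |∑ s', P s s' * (h k s' - hstar s')| := by
            rw [heq, abs_mul, abs_of_nonneg haΦ]
        _ ≤ (1-ε) * ((1-δ) * (η * q ^ k)) :=
            mul_le_mul (by linarith [hΦ1 s]) hd (abs_nonneg _) (by linarith)
        _ = ((1-ε)*(1-δ)) * (η * q ^ k) := by ring
        _ = η * q ^ (k+1) := by rw [← hqdef, pow_succ]; ring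
  -- hstar bounds via limits
  have htend : ∀ s, Tendsto (fun k => h k s) atTop (nhds (hstar s)) := by
    intro s
    rw [tendsto_iff_dist_tendsto_zero]
    apply squeeze_zero (g := fun k => η * q ^ k) (fun k => dist_nonneg) ?_ ?_
    · intro k; rw [Real.dist_eq]; exact hcontr k s
    · simpa using (tendsto_pow_atTop_nhds_zero_of_lt_one hq0 hq1).const_mul η
  have hstarbnd : ∀ s, Φ s ≤ hstar s ∧ hstar s ≤ 1 - δ * (1 - Φ s) := by
    intro s
    exact ⟨ge_of_tendsto (htend s) (Eventually.of_forall fun k => (hbnd k s).1),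
      le_of_tendsto (htend s) (Eventually.of_forall fun k => (hbnd k s).2)⟩
  have hstar01 : ∀ s, 0 ≤ hstar s ∧ hstar s ≤ 1 := by
    intro s
    constructor
    · linarith [(hstarbnd s).1, hΦ1 s]
    · have e := mul_nonneg (le_of_lt hδ) (by linarith [hΦ2 s] : (0:ℝ) ≤ 1 - Φ s)
      linarith [(hstarbnd s).2]
  have h01 : ∀ k s', 0 ≤ h k s' ∧ h k s' ≤ 1 := by
    intro k s'
    constructor
    · linarith [(hbnd k s').1, hΦ1 s']
    · have e := mul_nonneg (le_of_lt hδ) (by linarith [hΦ2 s'] : (0:ℝ) ≤ 1 - Φ s')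
      linarith [(hbnd k s').2]
  -- denominators
  have hdk : ∀ k s, δ ≤ 1 - ∑ s', P s s' * h k s' := by
    intro k s
    have := hsumub (h k) (fun s' => (h01 k s').2) s
    linarith
  have hds : ∀ s, δ ≤ 1 - ∑ s', P s s' * hstar s' := by
    intro s
    have := hsumub hstar (fun s' => (hstar01 s').2) s
    linarith
  have hid : ∀ k s, 1 - h (k+1) s = (1 - Φ s) * (1 - ∑ s', P s s' * h k s') := by
    intro k s; rw [hh k s]; ring
  have hids : ∀ s, 1 - hstar s = (1 - Φ s) * (1 - ∑ s', P s s' * hstar s') := by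
    intro s; conv_lhs => rw [hfix s]
    ring
  -- norms of r and ustar
  set R : ℝ := ‖r‖ with hRdef
  have hr : ∀ s s', |r s s'| ≤ R := by
    intro s s'
    calc |r s s'| = ‖r s s'‖ := (Real.norm_eq_abs _).symm
      _ ≤ ‖r s‖ := norm_le_pi_norm (r s) s'
      _ ≤ R := norm_le_pi_norm r s
  set Mu : ℝ := ‖ustar‖ with hMudef
  have hM : ∀ s, |ustar s| ≤ Mu := by
    intro s
    calc |ustar s| = ‖ustar s‖ := (Real.norm_eq_abs _).symm
      _ ≤ Mu := norm_le_pi_norm ustar s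
  have hR0 : 0 ≤ R := norm_nonneg _
  have hMu0 : 0 ≤ Mu := norm_nonneg _
  have hRM0 : (0:ℝ) ≤ R + Mu := by linarith
  have hRM : ∀ s s', |r s s' + γ * ustar s'| ≤ R + Mu := by
    intro s s'
    have h3 : |γ * ustar s'| ≤ γ * Mu := by
      rw [abs_mul, abs_of_nonneg hγ0]
      exact mul_le_mul_of_nonneg_left (hM s') hγ0
    calc |r s s' + γ * ustar s'| ≤ |r s s'| + |γ * ustar s'| := abs_add_le _ _
      _ ≤ R + Mu := by
          have e : γ * Mu ≤ 1 * Mu := mul_le_mul_of_nonneg_right (le_of_lt hγ1) hMu0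
          linarith [hr s s', h3]
  -- error sequence
  set E : ℕ → ℝ := fun k => ‖u k - ustar‖ with hEdef
  have hE0 : ∀ k, 0 ≤ E k := fun k => norm_nonneg _
  have hex : ∀ k s, |u k s - ustar s| ≤ E k := by
    intro k s
    have h1 := norm_le_pi_norm (u k - ustar) s
    rw [Pi.sub_apply, Real.norm_eq_abs] at h1
    exact h1
  set B : ℝ := 2*η/δ with hBdef
  have hB0 : 0 ≤ B := by rw [hBdef]; positivity
  set Dc : ℝ := η*(R+Mu)*(1/δ + 1/δ^2) with hDcdef
  have hDc0 : 0 ≤ Dc := by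
    rw [hDcdef]
    have : (0:ℝ) ≤ 1/δ + 1/δ^2 := by positivity
    exact mul_nonneg (mul_nonneg hη0 hRM0) this
  have hEk : ∀ j, E j = ‖u j - ustar‖ := fun j => rfl
  clear_value R Mu E B Dc
  -- the key recursive estimate
  have hrec : ∀ k, E (k+1) ≤ γ * (1 + B * q ^ k) * E k + Dc * q ^ k := by
    intro k
    have hqk : (0:ℝ) ≤ q ^ k := pow_nonneg hq0 k
    have hBq0 : (0:ℝ) ≤ 1 + B * q ^ k := by linarith [mul_nonneg hB0 hqk]
    have hRHS : 0 ≤ γ * (1 + B * q ^ k) * E k + Dc * q ^ k := by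
      have e1 := mul_nonneg (mul_nonneg hγ0 hBq0) (hE0 k)
      have e2 := mul_nonneg hDc0 hqk
      linarith
    rw [hEk (k+1), pi_norm_le_iff_of_nonneg hRHS]
    intro s
    rw [Pi.sub_apply, Real.norm_eq_abs]
    set d : ℝ := 1 - ∑ s', P s s' * h k s' with hd_def
    set d' : ℝ := 1 - ∑ s', P s s' * hstar s' with hd'_def
    have hd_pos : 0 < d := lt_of_lt_of_le hδ (hdk k s)
    have hd'_pos : 0 < d' := lt_of_lt_of_le hδ (hds s)
    have hdδ : δ ≤ d := hdk k s
    have hd'δ : δ ≤ d' := hds s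
    set σ1 : ℝ := ∑ s', P s s' * ((1 - h (k+1) s') * (r s s' + γ * u k s')) with hσ1
    set σ2 : ℝ := ∑ s', P s s' * ((1 - h (k+1) s') * (r s s' + γ * ustar s')) with hσ2
    set σ3 : ℝ := ∑ s', P s s' * ((1 - hstar s') * (r s s' + γ * ustar s')) with hσ3
    clear_value d d' σ1 σ2 σ3
    have haΦ : (0:ℝ) < 1 - Φ s := by linarith [hΦ2 s]
    have hpre : (1 - Φ s)/(1 - h (k+1) s) = 1/d := by
      rw [hid k s, ← hd_def, div_mul_eq_div_mul_one_div, div_self (ne_of_gt haΦ), one_mul]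
    have hpre' : (1 - Φ s)/(1 - hstar s) = 1/d' := by
      rw [hids s, ← hd'_def, div_mul_eq_div_mul_one_div, div_self (ne_of_gt haΦ), one_mul]
    have hu1 : u (k+1) s = σ1 / d := by
      rw [hσ1, hu k s, hpre, one_div, inv_mul_eq_div]
    have hu2 : ustar s = σ3 / d' := by
      rw [hσ3, ufix s, hpre', one_div, inv_mul_eq_div]
    have hdecomp : u (k+1) s - ustar s
        = (σ1 - σ2)/d + (σ2 - σ3)/d + σ3 * (1/d - 1/d') := by
      rw [hu1, hu2]
      ring
    -- term 1
    have hN0 : ∀ s', 0 ≤ 1 - h (k+1) s' := fun s' => by linarith [(h01 (k+1) s').2]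
    have ht1 : |σ1 - σ2| ≤ γ * ((∑ s', P s s' * (1 - h (k+1) s')) * E k) := by
      have heq : σ1 - σ2 = γ * ∑ s', P s s' * ((1 - h (k+1) s') * (u k s' - ustar s')) := by
        rw [hσ1, hσ2, ← Finset.sum_sub_distrib, Finset.mul_sum]
        apply Finset.sum_congr rfl; intros; ring
      rw [heq, abs_mul, abs_of_nonneg hγ0]
      apply mul_le_mul_of_nonneg_left _ hγ0
      exact hsum2 (fun s' => 1 - h (k+1) s') (fun s' => u k s' - ustar s') (E k)
        hN0 (hE0 k) (fun s' => hex k s') s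
    -- N ≤ d (1 + B q^k)
    have hNle : (∑ s', P s s' * (1 - h (k+1) s')) ≤ d * (1 + B * q ^ k) := by
      have e1 : ∑ s', P s s' * (1 - h (k+1) s')
          = (∑ s', P s s') - ∑ s', P s s' * h (k+1) s' := by
        rw [← Finset.sum_sub_distrib]
        apply Finset.sum_congr rfl; intros; ring
      have e2 := hsplit (h k) (h (k+1)) s
      have hdiff : ∀ s', |h k s' - h (k+1) s'| ≤ 2 * (η * q ^ k) := by
        intro s'
        have h1 := hcontr k s'
        have h2 := hcontr (k+1) s'
        have h3 : η * q ^ (k+1) ≤ η * q ^ k := by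
          rw [pow_succ]
          calc η * (q ^ k * q) ≤ η * (q ^ k * 1) := by
                apply mul_le_mul_of_nonneg_left _ hη0
                exact mul_le_mul_of_nonneg_left (le_of_lt hq1) hqk
            _ = η * q ^ k := by ring
        calc |h k s' - h (k+1) s'| ≤ |h k s' - hstar s'| + |hstar s' - h (k+1) s'| :=
              abs_sub_le _ _ _
          _ ≤ η * q ^ k + η * q ^ (k+1) := by
              rw [abs_sub_comm (hstar s') (h (k+1) s')]
              exact add_le_add h1 h2
          _ ≤ 2 * (η * q ^ k) := by linarith
      have hd2 := hsum (fun s' => h k s' - h (k+1) s') (2 * (η * q ^ k))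
        (by linarith [mul_nonneg hη0 hqk]) hdiff s
      have hsub : ∑ s', P s s' * (h k s' - h (k+1) s') ≤ 2 * (η * q ^ k) := by
        have h4 := le_of_abs_le hd2
        have e1 : (1-δ) * (2 * (η * q ^ k)) = 2 * (η * q ^ k) - δ * (2 * (η * q ^ k)) := by ring
        have e2 := mul_nonneg (le_of_lt hδ)
          (by linarith [mul_nonneg hη0 hqk] : (0:ℝ) ≤ 2 * (η * q ^ k))
        linarith
      have hBq : B * q ^ k * δ ≤ B * q ^ k * d :=
        mul_le_mul_of_nonneg_left hdδ (mul_nonneg hB0 hqk)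
      have hBqδ : 2 * (η * q ^ k) = B * q ^ k * δ := by
        rw [hBdef]; field_simp
      have hsumP := hP1 s
      have e3 : (∑ s', P s s' * (1 - h (k+1) s')) - d
          = (∑ s', P s s') - 1 + ∑ s', P s s' * (h k s' - h (k+1) s') := by
        rw [e1, hd_def, e2]; ring
      have e4 : d * (1 + B * q ^ k) = d + B * q ^ k * d := by ring
      linarith
    have ht1' : |σ1 - σ2| / d ≤ γ * (1 + B * q ^ k) * E k := by
      rw [div_le_iff₀ hd_pos]
      have h2 : γ * ((∑ s', P s s' * (1 - h (k+1) s')) * E k)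
          ≤ γ * ((d * (1 + B * q ^ k)) * E k) := by
        apply mul_le_mul_of_nonneg_left _ hγ0
        exact mul_le_mul_of_nonneg_right hNle (hE0 k)
      calc |σ1 - σ2| ≤ γ * ((∑ s', P s s' * (1 - h (k+1) s')) * E k) := ht1
        _ ≤ γ * ((d * (1 + B * q ^ k)) * E k) := h2
        _ = γ * (1 + B * q ^ k) * E k * d := by ring
    -- term 2
    have ht2 : |σ2 - σ3| ≤ η * q ^ k * (R + Mu) := by
      have heq : σ2 - σ3
          = ∑ s', P s s' * ((hstar s' - h (k+1) s') * (r s s' + γ * ustar s')) := by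
        rw [hσ2, hσ3, ← Finset.sum_sub_distrib]
        apply Finset.sum_congr rfl; intros; ring
      rw [heq]
      have hb : ∀ s', |(hstar s' - h (k+1) s') * (r s s' + γ * ustar s')|
          ≤ (η * q ^ k) * (R + Mu) := by
        intro s'
        rw [abs_mul]
        apply mul_le_mul _ (hRM s s') (abs_nonneg _) (mul_nonneg hη0 hqk)
        rw [abs_sub_comm]
        calc |h (k+1) s' - hstar s'| ≤ η * q ^ (k+1) := hcontr (k+1) s'
          _ ≤ η * q ^ k := by rw [pow_succ]; nlinarith [mul_nonneg hη0 hqk]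
      have h5 := hsum _ ((η * q ^ k) * (R + Mu))
        (mul_nonneg (mul_nonneg hη0 hqk) hRM0) hb s
      calc |∑ s', P s s' * ((hstar s' - h (k+1) s') * (r s s' + γ * ustar s'))|
          ≤ (1-δ) * ((η * q ^ k) * (R + Mu)) := h5
        _ ≤ η * q ^ k * (R + Mu) := by
            have e1 : (1-δ) * ((η * q ^ k) * (R + Mu))
                = (η * q ^ k) * (R + Mu) - δ * ((η * q ^ k) * (R + Mu)) := by ring
            have e2 := mul_nonneg (le_of_lt hδ) (mul_nonneg (mul_nonneg hη0 hqk) hRM0)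
            have e3 : η * q ^ k * (R + Mu) = (η * q ^ k) * (R + Mu) := by ring
            linarith
    have ht2' : |σ2 - σ3| / d ≤ (η * (R + Mu) / δ) * q ^ k := by
      rw [div_le_iff₀ hd_pos]
      have hcoef : (0:ℝ) ≤ (η * (R + Mu) / δ) * q ^ k := by
        apply mul_nonneg _ hqk
        apply div_nonneg (mul_nonneg hη0 hRM0) (le_of_lt hδ)
      calc |σ2 - σ3| ≤ η * q ^ k * (R + Mu) := ht2
        _ = (η * (R + Mu) / δ) * q ^ k * δ := by field_simp
        _ ≤ (η * (R + Mu) / δ) * q ^ k * d := mul_le_mul_of_nonneg_left hdδ hcoef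
    -- term 3
    have ht3a : |σ3| ≤ R + Mu := by
      have hw : ∀ s', 0 ≤ 1 - hstar s' := fun s' => by linarith [(hstar01 s').2]
      have h6 := hsum2 (fun s' => 1 - hstar s') (fun s' => r s s' + γ * ustar s')
        (R + Mu) hw hRM0 (fun s' => hRM s s') s
      have hPw : ∑ s', P s s' * (1 - hstar s') ≤ 1 := by
        have := hsumub (fun s' => 1 - hstar s')
          (fun s' => by show 1 - hstar s' ≤ 1; linarith [(hstar01 s').1]) s
        linarith
      calc |σ3| = |∑ s', P s s' * ((1 - hstar s') * (r s s' + γ * ustar s'))| := by rw [hσ3]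
        _ ≤ (∑ s', P s s' * (1 - hstar s')) * (R + Mu) := h6
        _ ≤ 1 * (R + Mu) := mul_le_mul_of_nonneg_right hPw hRM0
        _ = R + Mu := one_mul _
    have ht3b : |1/d - 1/d'| ≤ (η * q ^ k) / δ^2 := by
      have heq : 1/d - 1/d' = (d' - d)/(d*d') := by
        rw [div_sub_div _ _ (ne_of_gt hd_pos) (ne_of_gt hd'_pos), one_mul, mul_one]
      have hnum : |d' - d| ≤ η * q ^ k := by
        have heq2 : d' - d = ∑ s', P s s' * (h k s' - hstar s') := by
          rw [hd_def, hd'_def, hsplit]; ring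
        rw [heq2]
        have h7 := hsum (fun s' => h k s' - hstar s') (η * q ^ k)
          (mul_nonneg hη0 hqk) (fun s' => hcontr k s') s
        calc |∑ s', P s s' * (h k s' - hstar s')| ≤ (1-δ) * (η * q ^ k) := h7
          _ ≤ η * q ^ k := by
              have e1 : (1-δ) * (η * q ^ k) = η * q ^ k - δ * (η * q ^ k) := by ring
              have e2 := mul_nonneg (le_of_lt hδ) (mul_nonneg hη0 hqk)
              linarith
      rw [heq, abs_div, abs_of_pos (mul_pos hd_pos hd'_pos)]
      apply div_le_div₀ (mul_nonneg hη0 hqk) hnum (by positivity)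
      calc δ^2 = δ*δ := sq δ
        _ ≤ d*d' := mul_le_mul hdδ hd'δ (le_of_lt hδ) (by linarith)
    have ht3' : |σ3 * (1/d - 1/d')| ≤ ((R + Mu) * η / δ^2) * q ^ k := by
      rw [abs_mul]
      calc |σ3| * |1/d - 1/d'| ≤ (R + Mu) * ((η * q ^ k) / δ^2) :=
            mul_le_mul ht3a ht3b (abs_nonneg _) hRM0
        _ = ((R + Mu) * η / δ^2) * q ^ k := by ring
    -- assemble
    have e1 : |(σ1 - σ2)/d| = |σ1 - σ2|/d := by
      rw [abs_div, abs_of_pos hd_pos]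
    have e2 : |(σ2 - σ3)/d| = |σ2 - σ3|/d := by
      rw [abs_div, abs_of_pos hd_pos]
    have hDceq : (η * (R + Mu) / δ) * q ^ k + ((R + Mu) * η / δ^2) * q ^ k = Dc * q ^ k := by
      rw [hDcdef]; ring
    calc |u (k+1) s - ustar s|
        = |(σ1 - σ2)/d + (σ2 - σ3)/d + σ3 * (1/d - 1/d')| := by rw [hdecomp]
      _ ≤ |(σ1 - σ2)/d| + |(σ2 - σ3)/d| + |σ3 * (1/d - 1/d')| := abs_add_three _ _ _
      _ ≤ γ * (1 + B * q ^ k) * E k + (η * (R + Mu) / δ) * q ^ k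
            + ((R + Mu) * η / δ^2) * q ^ k := by
          rw [e1, e2]
          exact add_le_add (add_le_add ht1' ht2') ht3'
      _ = γ * (1 + B * q ^ k) * E k + Dc * q ^ k := by rw [add_assoc, hDceq]
  obtain ⟨C, ρ, hC, hρ0, hρ1, hb⟩ := aux_geom_rec E γ q B Dc hE0 hγ0 hγ1 hq0 hq1 hB0 hDc0 hrec
  exact ⟨C, ρ, hC, hρ0, hρ1, fun k => (hEk k) ▸ hb k⟩
end

section
/- Let S and A be nonempty finite sets, γ ∈ [0,1), and ρ̄ > 0. Let μ : S → A → ℝ with μ(a|s) > 0 and ∑_a μ(a|s) = 1 for all s; let π : S → A → ℝ with π(a|s) ≥ 0 and ∑_a π(a|s) = 1 for all s; let P : S × A × S → ℝ with P(s,a,s') ≥ 0 and ∑_{s'} P(s,a,s') ≤ 1 for all (s,a); and let H, G : S × A × S → ℝ with |G(s,a,s')| ≤ γ for all (s,a,s'). Define m(a|s) := min( ρ̄·μ(a|s), π(a|s) ) and the one-step V-trace operator 𝒱 : (S → ℝ) → (S → ℝ) by (𝒱V)(s) = V(s) + ∑_a m(a|s)·∑_{s'} P(s,a,s')·( H(s,a,s')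 + G(s,a,s')·V(s') − V(s) ). Then ‖𝒱V − 𝒱W‖_∞ ≤ ( 1 − (1−γ)·κ )·‖V − W‖_∞ for all V, W : S → ℝ, where κ := min_s ∑_a m(a|s)·∑_{s'} P(s,a,s'); in particular, if κ > 0 then 𝒱 is a contraction and has a unique fixed point. -/
/-- The expected one-step generalized V-trace operator with truncated
importance-sampling weights `m(a|s) = min(ρ̄·μ(a|s), π(a|s))`:
`(𝒱V)(s) = V(s) + ∑_a m(a|s)·∑_{s'} P(s,a,s')·(H(s,a,s') + G(s,a,s')·V(s') − V(s))`. -/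
noncomputable def VtraceOp {S A : Type*} [Fintype S] [Fintype A]
    (μ π : S → A → ℝ) (ρbar : ℝ) (P H G : S → A → S → ℝ)
    (V : S → ℝ) : S → ℝ :=
  fun s => V s + ∑ a, min (ρbar * μ s a) (π s a) *
    ∑ s', P s a s' * (H s a s' + G s a s' * V s' - V s)

/-- The one-step V-trace operator is a `(1 − (1−γ)·κ)`-contraction in the sup norm,
where `κ = min_s ∑_a m(a|s)·∑_{s'} P(s,a,s')`; if `κ > 0` it has a unique fixed point. -/
theorem vtrace_contraction {S A : Type*} [Fintype S] [Fintype A]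
    [Nonempty S] [Nonempty A]
    (γ ρbar : ℝ) (hγ0 : 0 ≤ γ) (hγ1 : γ < 1) (hρbar : 0 < ρbar)
    (μ : S → A → ℝ) (hμ0 : ∀ s a, 0 < μ s a) (hμ1 : ∀ s, ∑ a, μ s a = 1)
    (π : S → A → ℝ) (hπ0 : ∀ s a, 0 ≤ π s a) (hπ1 : ∀ s, ∑ a, π s a = 1)
    (P : S → A → S → ℝ)
    (hP0 : ∀ s a s', 0 ≤ P s a s') (hP1 : ∀ s a, ∑ s', P s a s' ≤ 1)
    (H G : S → A → S → ℝ) (hG : ∀ s a s', |G s a s'| ≤ γ) :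
    (∀ V W : S → ℝ, ‖VtraceOp μ π ρbar P H G V - VtraceOp μ π ρbar P H G W‖
      ≤ (1 - (1 - γ) * (Finset.univ.inf' Finset.univ_nonempty
          (fun s => ∑ a, min (ρbar * μ s a) (π s a) * ∑ s', P s a s'))) * ‖V - W‖) ∧
    (0 < Finset.univ.inf' Finset.univ_nonempty
        (fun s => ∑ a, min (ρbar * μ s a) (π s a) * ∑ s', P s a s') →
      ∃! V : S → ℝ, VtraceOp μ π ρbar P H G V = V) := by
  set m : S → A → ℝ := fun s a => min (ρbar * μ s a) (π s a) with hm
  set κ : ℝ := Finset.univ.inf' Finset.univ_nonempty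
      (fun s => ∑ a, m s a * ∑ s', P s a s') with hκ
  have hm0 : ∀ s a, 0 ≤ m s a := fun s a =>
    le_min (le_of_lt (mul_pos hρbar (hμ0 s a))) (hπ0 s a)
  have hmπ : ∀ s a, m s a ≤ π s a := fun s a => min_le_right _ _
  -- Sig_s := ∑_a m s a * ∑_{s'} P s a s'
  have hSig0 : ∀ s, 0 ≤ ∑ a, m s a * ∑ s', P s a s' := fun s =>
    Finset.sum_nonneg fun a _ => mul_nonneg (hm0 s a)
      (Finset.sum_nonneg fun s' _ => hP0 s a s')
  have hSig1 : ∀ s, ∑ a, m s a * ∑ s', P s a s' ≤ 1 := fun s => by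
    calc ∑ a, m s a * ∑ s', P s a s' ≤ ∑ a, π s a :=
          Finset.sum_le_sum fun a _ => by
            calc m s a * ∑ s', P s a s' ≤ π s a * 1 :=
                  mul_le_mul (hmπ s a) (hP1 s a)
                    (Finset.sum_nonneg fun s' _ => hP0 s a s') (hπ0 s a)
            _ = π s a := mul_one _
      _ = 1 := hπ1 s
  have hκ0 : 0 ≤ κ := by
    rw [hκ]
    exact Finset.le_inf' _ _ fun s _ => hSig0 s
  have hκle : ∀ s, κ ≤ ∑ a, m s a * ∑ s', P s a s' := fun s =>
    Finset.inf'_le _ (Finset.mem_univ s)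
  have hκ1 : κ ≤ 1 := le_trans (hκle (Classical.arbitrary S)) (hSig1 _)
  have hK0 : 0 ≤ 1 - (1 - γ) * κ := by nlinarith
  have main : ∀ V W : S → ℝ, ‖VtraceOp μ π ρbar P H G V - VtraceOp μ π ρbar P H G W‖
      ≤ (1 - (1 - γ) * κ) * ‖V - W‖ := by
    intro V W
    set D : S → ℝ := V - W with hD
    have hDnorm : ∀ s, |D s| ≤ ‖D‖ := fun s => norm_le_pi_norm D s
    rw [pi_norm_le_iff_of_nonneg (mul_nonneg hK0 (norm_nonneg _))]
    intro s
    have expand : ∀ X : S → ℝ,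
        ∑ a, m s a * ∑ s', P s a s' * (H s a s' + G s a s' * X s' - X s)
        = (∑ a, m s a * ∑ s', P s a s' * H s a s')
          + (∑ a, m s a * ∑ s', P s a s' * (G s a s' * X s'))
          - (∑ a, m s a * ∑ s', P s a s') * X s := by
      intro X
      rw [Finset.sum_mul, ← Finset.sum_add_distrib, ← Finset.sum_sub_distrib]
      refine Finset.sum_congr rfl fun a _ => ?_
      have inner : ∑ s', P s a s' * (H s a s' + G s a s' * X s' - X s)
          = (∑ s', P s a s' * H s a s') + (∑ s', P s a s' * (G s a s' * X s'))
            - (∑ s', P s a s') * X s := by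
        rw [Finset.sum_mul, ← Finset.sum_add_distrib, ← Finset.sum_sub_distrib]
        exact Finset.sum_congr rfl fun s' _ => by ring
      rw [inner]; ring
    have split : ∑ a, m s a * ∑ s', P s a s' * (G s a s' * D s')
        = (∑ a, m s a * ∑ s', P s a s' * (G s a s' * V s'))
          - (∑ a, m s a * ∑ s', P s a s' * (G s a s' * W s')) := by
      rw [← Finset.sum_sub_distrib]
      refine Finset.sum_congr rfl fun a _ => ?_
      rw [← mul_sub, ← Finset.sum_sub_distrib]
      refine congrArg _ (Finset.sum_congr rfl fun s' _ => ?_)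
      simp only [hD, Pi.sub_apply]; ring
    have key : (VtraceOp μ π ρbar P H G V - VtraceOp μ π ρbar P H G W) s
        = (1 - ∑ a, m s a * ∑ s', P s a s') * D s
          + ∑ a, m s a * ∑ s', P s a s' * (G s a s' * D s') := by
      have hVW : (VtraceOp μ π ρbar P H G V - VtraceOp μ π ρbar P H G W) s
          = V s + (∑ a, m s a * ∑ s', P s a s' * (H s a s' + G s a s' * V s' - V s))
            - (W s + ∑ a, m s a * ∑ s', P s a s' * (H s a s' + G s a s' * W s' - W s)) := rfl
      rw [hVW, expand V, expand W, split]
      simp only [hD, Pi.sub_apply]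
      ring
    rw [key]
    have h1 : 0 ≤ 1 - ∑ a, m s a * ∑ s', P s a s' := by linarith [hSig1 s]
    calc |(1 - ∑ a, m s a * ∑ s', P s a s') * D s
          + ∑ a, m s a * ∑ s', P s a s' * (G s a s' * D s')|
        ≤ |(1 - ∑ a, m s a * ∑ s', P s a s') * D s|
          + |∑ a, m s a * ∑ s', P s a s' * (G s a s' * D s')| := abs_add_le _ _
      _ ≤ (1 - ∑ a, m s a * ∑ s', P s a s') * ‖D‖
          + (∑ a, m s a * ∑ s', P s a s') * (γ * ‖D‖) := by
          gcongr ?_ + ?_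
          · rw [abs_mul, abs_of_nonneg h1]
            exact mul_le_mul_of_nonneg_left (hDnorm s) h1
          · calc |∑ a, m s a * ∑ s', P s a s' * (G s a s' * D s')|
                ≤ ∑ a, |m s a * ∑ s', P s a s' * (G s a s' * D s')| :=
                  Finset.abs_sum_le_sum_abs _ _
              _ ≤ ∑ a, m s a * ((∑ s', P s a s') * (γ * ‖D‖)) := by
                  refine Finset.sum_le_sum fun a _ => ?_
                  rw [abs_mul, abs_of_nonneg (hm0 s a)]
                  refine mul_le_mul_of_nonneg_left ?_ (hm0 s a)
                  calc |∑ s', P s a s' * (G s a s' * D s')|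
                      ≤ ∑ s', |P s a s' * (G s a s' * D s')| :=
                        Finset.abs_sum_le_sum_abs _ _
                    _ ≤ ∑ s', P s a s' * (γ * ‖D‖) := by
                        refine Finset.sum_le_sum fun s' _ => ?_
                        rw [abs_mul, abs_of_nonneg (hP0 s a s'), abs_mul]
                        exact mul_le_mul_of_nonneg_left
                          (mul_le_mul (hG s a s') (hDnorm s') (abs_nonneg _) hγ0)
                          (hP0 s a s')
                    _ = (∑ s', P s a s') * (γ * ‖D‖) := by rw [Finset.sum_mul]
              _ = (∑ a, m s a * ∑ s', P s a s') * (γ * ‖D‖) := by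
                  rw [Finset.sum_mul]; exact Finset.sum_congr rfl fun a _ => by ring
      _ = (1 - (1 - γ) * (∑ a, m s a * ∑ s', P s a s')) * ‖D‖ := by ring
      _ ≤ (1 - (1 - γ) * κ) * ‖D‖ := by
          have h2 := hκle s
          refine mul_le_mul_of_nonneg_right ?_ (norm_nonneg D)
          nlinarith [mul_nonneg (by linarith : (0:ℝ) ≤ 1 - γ)
            (by linarith : (0:ℝ) ≤ (∑ a, m s a * ∑ s', P s a s') - κ)]
  refine ⟨main, fun hκpos => ?_⟩
  have hKlt : 1 - (1 - γ) * κ < 1 := by nlinarith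
  set K : NNReal := ⟨1 - (1 - γ) * κ, hK0⟩ with hKdef
  have hlip : LipschitzWith K (VtraceOp μ π ρbar P H G) := by
    refine LipschitzWith.of_dist_le_mul fun V W => ?_
    rw [dist_eq_norm, dist_eq_norm]
    exact main V W
  have hcontr : ContractingWith K (VtraceOp μ π ρbar P H G) := ⟨by exact_mod_cast hKlt, hlip⟩
  exact ⟨hcontr.fixedPoint, hcontr.fixedPoint_isFixedPt,
    fun V hV => hcontr.fixedPoint_unique hV⟩
end

section
/- Let S and A be nonempty finite sets, γ ∈ [0,1), and ρ̄ > 0. Let μ : S → A → ℝ with μ(a|s) > 0 and ∑_a μ(a|s) = 1 for all s; let π : S → A → ℝ with π(a|s) ≥ 0 and ∑_a π(a|s) = 1 for all s; let P : S × A × S → ℝ with P(s,a,s') ≥ 0 and ∑_{s'} P(s,a,s') = 1 for all (s,a); and let H, G : S × A × S → ℝ with |G(s,a,s')| ≤ γ. Define m(a|s) := min( ρ̄·μ(a|s), π(a|s) ), the reweighted policy π_ρ̄(a|s) := m(a|s) / ∑_b m(b|s), and the one-step V-trace operator (𝒱V)(s) = V(s) + ∑_a m(a|s)·∑_{s'}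 P(s,a,s')·( H(s,a,s') + G(s,a,s')·V(s') − V(s) ). Then: (i) ∑_b m(b|s) > 0 for every s, so π_ρ̄ is well defined; (ii) a function V : S → ℝ is a fixed point of 𝒱 if and only if V(s) = ∑_a π_ρ̄(a|s)·∑_{s'} P(s,a,s')·( H(s,a,s') + G(s,a,s')·V(s') ) for all s, and there is exactly one such V; (iii) if moreover ρ̄·μ(a|s) ≥ π(a|s) for all (s,a), then the unique fixed point of 𝒱 equals the unique solution of the target-policy Bellman equation V(s) = ∑_a π(a|s)·∑_{s'} P(s,a,s')·( H(s,a,s') + G(s,a,s')·V(s') ). -/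
lemma bellman_existsUnique {S A : Type*} [Fintype S] [Fintype A] [Nonempty S]
    (γ : ℝ) (hγ0 : 0 ≤ γ) (hγ1 : γ < 1)
    (q : S → A → ℝ) (hq0 : ∀ s a, 0 ≤ q s a) (hq1 : ∀ s, ∑ a, q s a = 1)
    (P H G : S → A → S → ℝ)
    (hP0 : ∀ s a s', 0 ≤ P s a s') (hP1 : ∀ s a, ∑ s', P s a s' = 1)
    (hG : ∀ s a s', |G s a s'| ≤ γ) :
    ∃! V : S → ℝ, ∀ s, V s = ∑ a, q s a * ∑ s', P s a s' * (H s a s' + G s a s' * V s') := by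
  set T : (S → ℝ) → (S → ℝ) :=
    fun V s => ∑ a, q s a * ∑ s', P s a s' * (H s a s' + G s a s' * V s') with hTdef
  have hT : ∀ V W : S → ℝ, dist (T V) (T W) ≤ γ * dist V W := by
    intro V W
    rw [dist_pi_le_iff (mul_nonneg hγ0 dist_nonneg)]
    intro s
    rw [Real.dist_eq]
    have hsub : T V s - T W s =
        ∑ a, q s a * ∑ s', P s a s' * (G s a s' * (V s' - W s')) := by
      simp only [hTdef, ← Finset.sum_sub_distrib, ← mul_sub]
      congr 1; ext a; congr 1; congr 1; ext s'; ring
    rw [hsub]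
    calc |∑ a, q s a * ∑ s', P s a s' * (G s a s' * (V s' - W s'))|
        ≤ ∑ a, |q s a * ∑ s', P s a s' * (G s a s' * (V s' - W s'))| :=
          Finset.abs_sum_le_sum_abs _ _
      _ ≤ ∑ a, q s a * (γ * dist V W) := by
          apply Finset.sum_le_sum
          intro a _
          rw [abs_mul, abs_of_nonneg (hq0 s a)]
          apply mul_le_mul_of_nonneg_left _ (hq0 s a)
          calc |∑ s', P s a s' * (G s a s' * (V s' - W s'))|
              ≤ ∑ s', |P s a s' * (G s a s' * (V s' - W s'))| :=
                Finset.abs_sum_le_sum_abs _ _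
            _ ≤ ∑ s', P s a s' * (γ * dist V W) := by
                apply Finset.sum_le_sum
                intro s' _
                rw [abs_mul, abs_of_nonneg (hP0 s a s'), abs_mul]
                apply mul_le_mul_of_nonneg_left _ (hP0 s a s')
                have h1 : |V s' - W s'| ≤ dist V W := by
                  rw [← Real.dist_eq]; exact dist_le_pi_dist V W s'
                exact mul_le_mul (hG s a s') h1 (abs_nonneg _) hγ0
            _ = γ * dist V W := by rw [← Finset.sum_mul, hP1, one_mul]
      _ = γ * dist V W := by rw [← Finset.sum_mul, hq1, one_mul]
  have hC : ContractingWith ⟨γ, hγ0⟩ T :=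
    ⟨by exact_mod_cast hγ1, LipschitzWith.of_dist_le_mul hT⟩
  refine ⟨hC.fixedPoint T, ?_, ?_⟩
  · intro s
    have := hC.fixedPoint_isFixedPt
    conv_lhs => rw [← this]
  · intro V hV
    exact hC.fixedPoint_unique (funext fun s => (hV s).symm)


/-- Bias characterization of the V-trace fixed point: the reweighted policy
`π_ρ̄(a|s) = m(a|s)/∑_b m(b|s)` is well defined; `V` is a fixed point of the
V-trace operator iff it is the (unique) solution of the Bellman equation for
`π_ρ̄`; and if `ρ̄·μ ≥ π` everywhere the fixed point is the value function of `π`. -/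
theorem vtrace_fixed_point_bias {S A : Type*} [Fintype S] [Fintype A]
    [Nonempty S] [Nonempty A]
    (γ ρbar : ℝ) (hγ0 : 0 ≤ γ) (hγ1 : γ < 1) (hρbar : 0 < ρbar)
    (μ : S → A → ℝ) (hμ0 : ∀ s a, 0 < μ s a) (hμ1 : ∀ s, ∑ a, μ s a = 1)
    (π : S → A → ℝ) (hπ0 : ∀ s a, 0 ≤ π s a) (hπ1 : ∀ s, ∑ a, π s a = 1)
    (P : S → A → S → ℝ)
    (hP0 : ∀ s a s', 0 ≤ P s a s') (hP1 : ∀ s a, ∑ s', P s a s' = 1)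
    (H G : S → A → S → ℝ) (hG : ∀ s a s', |G s a s'| ≤ γ) :
    (∀ s, 0 < ∑ b, min (ρbar * μ s b) (π s b)) ∧
    ((∀ V : S → ℝ, VtraceOp μ π ρbar P H G V = V ↔
        ∀ s, V s = ∑ a, (min (ρbar * μ s a) (π s a) / ∑ b, min (ρbar * μ s b) (π s b)) *
          ∑ s', P s a s' * (H s a s' + G s a s' * V s')) ∧
      (∃! V : S → ℝ, VtraceOp μ π ρbar P H G V = V)) ∧
    ((∀ s a, π s a ≤ ρbar * μ s a) →
      (∃! V : S → ℝ, ∀ s, V s = ∑ a, π s a *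
        ∑ s', P s a s' * (H s a s' + G s a s' * V s')) ∧
      (∀ V : S → ℝ, VtraceOp μ π ρbar P H G V = V ↔
        ∀ s, V s = ∑ a, π s a *
          ∑ s', P s a s' * (H s a s' + G s a s' * V s'))) := by
  set m : S → A → ℝ := fun s a => min (ρbar * μ s a) (π s a) with hm
  set c : S → ℝ := fun s => ∑ b, m s b with hc
  have hm0 : ∀ s a, 0 ≤ m s a := fun s a =>
    le_min (le_of_lt (mul_pos hρbar (hμ0 s a))) (hπ0 s a)
  -- (i) positivity of c
  have hcpos : ∀ s, 0 < c s := by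
    intro s
    obtain ⟨a, ha⟩ : ∃ a, 0 < π s a := by
      by_contra h
      push_neg at h
      have : ∑ a, π s a = 0 :=
        Finset.sum_eq_zero fun a _ => le_antisymm (h a) (hπ0 s a)
      rw [hπ1 s] at this; norm_num at this
    have hma : 0 < m s a := lt_min (mul_pos hρbar (hμ0 s a)) ha
    exact Finset.sum_pos' (fun b _ => hm0 s b) ⟨a, Finset.mem_univ a, hma⟩
  have hcne : ∀ s, c s ≠ 0 := fun s => ne_of_gt (hcpos s)
  -- the fixed-point iff
  have key : ∀ V : S → ℝ, VtraceOp μ π ρbar P H G V = V ↔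
      ∀ s, V s = ∑ a, (m s a / c s) *
        ∑ s', P s a s' * (H s a s' + G s a s' * V s') := by
    intro V
    have step : ∀ s, (VtraceOp μ π ρbar P H G V s = V s) ↔
        (V s = ∑ a, (m s a / c s) * ∑ s', P s a s' * (H s a s' + G s a s' * V s')) := by
      intro s
      unfold VtraceOp
      rw [add_eq_left]
      have inner : ∀ a, ∑ s', P s a s' * (H s a s' + G s a s' * V s' - V s) =
          (∑ s', P s a s' * (H s a s' + G s a s' * V s')) - V s := by
        intro a
        have h1 : ∀ s' : S, P s a s' * (H s a s' + G s a s' * V s' - V s)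
            = P s a s' * (H s a s' + G s a s' * V s') - P s a s' * V s := fun s' => by ring
        rw [Finset.sum_congr rfl (fun s' _ => h1 s'), Finset.sum_sub_distrib,
          ← Finset.sum_mul, hP1, one_mul]
      have lhs_eq : ∑ a, m s a * ∑ s', P s a s' * (H s a s' + G s a s' * V s' - V s)
          = (∑ a, m s a * ∑ s', P s a s' * (H s a s' + G s a s' * V s')) - c s * V s := by
        rw [Finset.sum_congr rfl (fun a _ => by rw [inner a, mul_sub]),
          Finset.sum_sub_distrib, ← Finset.sum_mul]
      rw [lhs_eq, sub_eq_zero]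
      have hrhs : ∑ a, (m s a / c s) * ∑ s', P s a s' * (H s a s' + G s a s' * V s')
          = (∑ a, m s a * ∑ s', P s a s' * (H s a s' + G s a s' * V s')) / c s := by
        rw [Finset.sum_div]
        exact Finset.sum_congr rfl fun a _ => by rw [div_mul_eq_mul_div]
      rw [hrhs, eq_div_iff (hcne s)]
      constructor
      · intro h; linarith
      · intro h; linarith
    constructor
    · intro h s; exact (step s).mp (congrFun h s)
    · intro h; funext s; exact (step s).mpr (h s)
  have hEU : ∃! V : S → ℝ, ∀ s, V s = ∑ a, (m s a / c s) *
      ∑ s', P s a s' * (H s a s' + G s a s' * V s') :=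
    bellman_existsUnique γ hγ0 hγ1 (fun s a => m s a / c s)
      (fun s a => div_nonneg (hm0 s a) (le_of_lt (hcpos s)))
      (fun s => by rw [← Finset.sum_div]; exact div_self (hcne s))
      P H G hP0 hP1 hG
  refine ⟨hcpos, ⟨key, ?_⟩, ?_⟩
  · obtain ⟨V, hV, hVu⟩ := hEU
    exact ⟨V, (key V).mpr hV, fun W hW => hVu W ((key W).mp hW)⟩
  · intro hle
    have hmeq : ∀ s a, m s a = π s a := fun s a => min_eq_right (hle s a)
    have hceq : ∀ s, c s = 1 := by
      intro s; rw [hc]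
      simp only [hmeq]
      exact hπ1 s
    have hsimp : ∀ (V : S → ℝ) s,
        (∑ a, (m s a / c s) * ∑ s', P s a s' * (H s a s' + G s a s' * V s'))
        = ∑ a, π s a * ∑ s', P s a s' * (H s a s' + G s a s' * V s') :=
      fun V s => Finset.sum_congr rfl fun a _ => by rw [hmeq, hceq, div_one]
    constructor
    · refine bellman_existsUnique γ hγ0 hγ1 π hπ0 hπ1 P H G hP0 hP1 hG
    · intro V
      rw [key V]
      exact forall_congr' fun s => by rw [hsimp V s]
end
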